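/- arXiv:1904.04522 — 7 statements merged into one kernel-verified Lean document; each statement's English description precedes it below -/
import Mathlib

section
/- F₂ is atomless conditionally to F₁ if and only if for every A ∈ F₂ with P[E[1_A | F₁] > 0] > 0 there exists B ∈ F₂ with B ⊂ A such that P[ 0 < E[1_B | F₁] < E[1_A | F₁] ] > 0. -/
/-!
Exhaustion. Write `G(B)` for the `F₁`-measurable set where `0 < E[1_B | F₁] < E[1_A | F₁]`.
Take `Bₙ ⊆ A` with `P(G(Bₙ))` tending to the supremum `s`, disjointify the `G(Bₙ)` into `Dₙ` and
glue `B = ⋃ₙ Bₙ ∩ Dₙ`. Conditional expectation is local on `F₁`-sets, so `E[1_B | F₁] = E[1_{Bₙ} | F₁]`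
on `Dₙ`; hence `S = ⋃ₙ G(Bₙ)` satisfies `B ⊆ S ⊆ G(B)` a.e. and `P(S) = s`. If `{E[1_A | F₁] > 0} \ S`
were not null, the hypothesis applied to `A \ S` would give `B' ⊆ A \ S` splitting it on some `T`
of positive measure, and `B ∪ B'` would split `A` on `S ∪ T`, of measure `s + P(T) > s`.
-/

open MeasureTheory

/-- `F₂` is atomless conditionally to `F₁`: for every `A ∈ F₂` there is `B ∈ F₂`, `B ⊆ A`,
with `0 < E[1_B | F₁] < E[1_A | F₁]` almost surely on the set `{E[1_A | F₁] > 0}`. -/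
def CondAtomless {Ω : Type*} (m1 m2 : MeasurableSpace Ω) (μ : @Measure Ω m2) : Prop :=
  ∀ A : Set Ω, MeasurableSet[m2] A →
    ∃ B : Set Ω, MeasurableSet[m2] B ∧ B ⊆ A ∧
      ∀ᵐ ω ∂μ, 0 < (μ[A.indicator (fun _ => (1 : ℝ)) | m1]) ω →
        0 < (μ[B.indicator (fun _ => (1 : ℝ)) | m1]) ω ∧
        (μ[B.indicator (fun _ => (1 : ℝ)) | m1]) ω <
          (μ[A.indicator (fun _ => (1 : ℝ)) | m1]) ω

open Set Filter Function

theorem iUnion_inter_inter_of_pairwise_disjoint {Ω ι : Type*} {B D : ι → Set Ω}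
    (hD : Pairwise (Disjoint on D)) (i : ι) :
    (⋃ j, B j ∩ D j) ∩ D i = B i ∩ D i := by
  ext ω
  simp only [mem_inter_iff, mem_iUnion]
  refine ⟨fun ⟨⟨j, hωB, hωDj⟩, hωDi⟩ => ?_, fun ⟨hωB, hωD⟩ => ⟨⟨i, hωB, hωD⟩, hωD⟩⟩
  obtain rfl : j = i := by_contra fun hji => disjoint_left.1 (hD hji) hωDj hωDi
  exact ⟨hωB, hωDi⟩

section

variable {Ω : Type*} {m m0 : MeasurableSpace Ω} {μ : Measure[m0] Ω} {A B B' C : Set Ω}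

noncomputable def condProb (m : MeasurableSpace Ω) (μ : Measure[m0] Ω) (B : Set Ω) : Ω → ℝ :=
  μ[B.indicator (fun _ => (1 : ℝ)) | m]

def condSplitSet (m : MeasurableSpace Ω) (μ : Measure[m0] Ω) (A B : Set Ω) : Set Ω :=
  {ω | 0 < condProb m μ B ω ∧ condProb m μ B ω < condProb m μ A ω}

theorem mem_condSplitSet {ω : Ω} : ω ∈ condSplitSet m μ A B ↔
    0 < condProb m μ B ω ∧ condProb m μ B ω < condProb m μ A ω :=
  Iff.rfl

theorem condAtomless_iff :
    CondAtomless m m0 μ ↔ ∀ A, MeasurableSet A → ∃ B, MeasurableSet B ∧ B ⊆ A ∧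
      {ω | 0 < condProb m μ A ω} ≤ᵐ[μ] condSplitSet m μ A B :=
  Iff.rfl

theorem measurableSet_condSplitSet : MeasurableSet[m] (condSplitSet m μ A B) :=
  have hP : ∀ B, Measurable[m] (condProb m μ B) := fun _ => stronglyMeasurable_condExp.measurable
  (measurableSet_lt measurable_const (hP B)).inter (measurableSet_lt (hP B) (hP A))

theorem condProb_empty : condProb m μ ∅ = 0 := by
  rw [condProb, indicator_empty]
  exact condExp_zero

theorem CondAtomless.exists_measure_condSplitSet_pos (h : CondAtomless m m0 μ)
    (hA : MeasurableSet A) (hpos : 0 < μ {ω | 0 < condProb m μ A ω}) :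
    ∃ B, MeasurableSet B ∧ B ⊆ A ∧ 0 < μ (condSplitSet m μ A B) := by
  obtain ⟨B, hB, hBA, hAB⟩ := condAtomless_iff.1 h A hA
  exact ⟨B, hB, hBA, hpos.trans_le (measure_mono_ae hAB)⟩

variable [IsFiniteMeasure μ]

theorem condProb_inter (hB : MeasurableSet B) (hC : MeasurableSet[m] C) :
    condProb m μ (B ∩ C) =ᵐ[μ] C.indicator (condProb m μ B) := by
  rw [condProb, inter_comm, ← indicator_indicator]
  exact condExp_indicator ((integrable_const 1).indicator hB) hC

theorem condProb_union (hB : MeasurableSet B) (hC : MeasurableSet C) (hBC : Disjoint B C) :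
    condProb m μ (B ∪ C) =ᵐ[μ] condProb m μ B + condProb m μ C := by
  rw [condProb, indicator_union_of_disjoint hBC]
  exact condExp_add ((integrable_const 1).indicator hB) ((integrable_const 1).indicator hC) m

theorem condProb_eq_of_inter_eq (hB : MeasurableSet B) (hB' : MeasurableSet B')
    (hC : MeasurableSet[m] C) (h : B ∩ C = B' ∩ C) :
    ∀ᵐ ω ∂μ, ω ∈ C → condProb m μ B ω = condProb m μ B' ω := by
  filter_upwards [condProb_inter hB hC, condProb_inter hB' hC] with ω hωB hωB' hωC
  rw [← indicator_of_mem hωC (condProb m μ B), ← hωB, h, hωB', indicator_of_mem hωC]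

theorem condProb_eq_zero_of_subset (hB : MeasurableSet B) (hC : MeasurableSet[m] C)
    (hBC : B ⊆ C) : ∀ᵐ ω ∂μ, ω ∉ C → condProb m μ B ω = 0 := by
  have h : B ∩ Cᶜ = ∅ ∩ Cᶜ := by
    rw [empty_inter, ← disjoint_iff_inter_eq_empty, disjoint_compl_right_iff_subset]
    exact hBC
  filter_upwards [condProb_eq_of_inter_eq hB MeasurableSet.empty hC.compl h] with ω hω hωC
  rw [hω hωC, condProb_empty, Pi.zero_apply]

theorem exists_condSplitSet_ae_ge_iUnion (hm : m ≤ m0) {B : ℕ → Set Ω}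
    (hB : ∀ n, MeasurableSet (B n)) (hBA : ∀ n, B n ⊆ A) :
    ∃ B', MeasurableSet B' ∧ B' ⊆ A ∧ B' ⊆ ⋃ n, condSplitSet m μ A (B n) ∧
      (⋃ n, condSplitSet m μ A (B n)) ≤ᵐ[μ] condSplitSet m μ A B' := by
  set G := fun n => condSplitSet m μ A (B n)
  have hD : ∀ n, MeasurableSet[m] (disjointed G n) :=
    MeasurableSet.disjointed fun _ => measurableSet_condSplitSet
  have hB' : MeasurableSet (⋃ n, B n ∩ disjointed G n) :=
    .iUnion fun n => (hB n).inter (hm _ (hD n))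
  refine ⟨_, hB', iUnion_subset fun n => inter_subset_left.trans (hBA n),
    iUnion_mono fun n => inter_subset_right.trans (disjointed_subset G n), ?_⟩
  have hloc : ∀ n, ∀ᵐ ω ∂μ, ω ∈ disjointed G n →
      condProb m μ (⋃ n, B n ∩ disjointed G n) ω = condProb m μ (B n) ω := fun n =>
    condProb_eq_of_inter_eq hB' (hB n) (hD n)
      (iUnion_inter_inter_of_pairwise_disjoint (disjoint_disjointed G) n)
  rw [← iUnion_disjointed]
  filter_upwards [ae_all_iff.2 hloc] with ω hω hωD
  obtain ⟨n, hn⟩ := mem_iUnion.1 hωD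
  have hωG : ω ∈ G n := disjointed_subset G n hn
  show ω ∈ condSplitSet m μ A _
  rwa [mem_condSplitSet, hω n hn]

theorem exists_condSplitSet_max (hm : m ≤ m0) (A : Set Ω) :
    ∃ B S, MeasurableSet B ∧ B ⊆ A ∧ MeasurableSet[m] S ∧ B ⊆ S ∧
      S ≤ᵐ[μ] condSplitSet m μ A B ∧
      ∀ C, MeasurableSet C → C ⊆ A → μ (condSplitSet m μ A C) ≤ μ S := by
  set V := (fun B => μ (condSplitSet m μ A B)) '' {B | MeasurableSet B ∧ B ⊆ A}
  obtain ⟨u, -, hu_tend, hu_mem⟩ :=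
    exists_seq_tendsto_sSup (⟨_, ∅, ⟨.empty, empty_subset A⟩, rfl⟩ : V.Nonempty)
      (OrderTop.bddAbove V)
  choose B hB hμB using hu_mem
  set G := fun n => condSplitSet m μ A (B n)
  obtain ⟨B', hB', hB'A, hB'S, hSB'⟩ :=
    exists_condSplitSet_ae_ge_iUnion (μ := μ) hm (fun n => (hB n).1) (fun n => (hB n).2)
  refine ⟨B', _, hB', hB'A, .iUnion fun n => measurableSet_condSplitSet, hB'S, hSB',
    fun C hC hCA => ?_⟩
  calc μ (condSplitSet m μ A C) ≤ sSup V := le_sSup ⟨C, ⟨hC, hCA⟩, rfl⟩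
    _ ≤ _ := le_of_tendsto' hu_tend fun n => hμB n ▸ measure_mono (subset_iUnion G n)

theorem union_condSplitSet_ae_le {S : Set Ω} (hA : MeasurableSet A) (hB : MeasurableSet B)
    (hB' : MeasurableSet B') (hS : MeasurableSet[m] S) (hBS : B ⊆ S)
    (hSB : S ≤ᵐ[μ] condSplitSet m μ A B) (hB'A : B' ⊆ A ∩ Sᶜ) :
    (S ∪ condSplitSet m μ (A ∩ Sᶜ) B' : Set Ω) ≤ᵐ[μ] condSplitSet m μ A (B ∪ B') := by
  have hB'S : B' ⊆ Sᶜ := hB'A.trans inter_subset_right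
  filter_upwards [hSB, condProb_union hB hB' (disjoint_of_subset hBS hB'S disjoint_compl_right),
    condProb_inter hA hS.compl, condProb_eq_zero_of_subset hB hS hBS,
    condProb_eq_zero_of_subset hB' hS.compl hB'S] with ω hωSB hunion hA' hB0 hB'0 hω
  change ω ∈ S ∪ condSplitSet m μ (A ∩ Sᶜ) B' at hω
  change ω ∈ S → ω ∈ condSplitSet m μ A B at hωSB
  show ω ∈ condSplitSet m μ A (B ∪ B')
  rw [mem_condSplitSet, hunion, Pi.add_apply]
  by_cases hωS : ω ∈ S
  · rw [hB'0 (not_not_intro hωS), add_zero]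
    exact hωSB hωS
  · rw [hB0 hωS, zero_add, ← indicator_of_mem (show ω ∈ Sᶜ from hωS) (condProb m μ A), ← hA']
    exact hω.resolve_left hωS

theorem condAtomless_of_forall_exists_measure_condSplitSet_pos (hm : m ≤ m0)
    (h : ∀ A, MeasurableSet A → 0 < μ {ω | 0 < condProb m μ A ω} →
      ∃ B, MeasurableSet B ∧ B ⊆ A ∧ 0 < μ (condSplitSet m μ A B)) :
    CondAtomless m m0 μ := by
  refine condAtomless_iff.2 fun A hA => ?_
  obtain ⟨B, S, hB, hBA, hS, hBS, hSB, hmax⟩ := exists_condSplitSet_max (μ := μ) hm A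
  refine ⟨B, hB, hBA, ?_⟩
  suffices hnull : μ ({ω | 0 < condProb m μ A ω} \ S) = 0 by
    filter_upwards [hSB, measure_eq_zero_iff_ae_notMem.1 hnull] with ω hωB hω hωA
    exact hωB (not_not.1 fun hωS => hω ⟨hωA, hωS⟩)
  by_contra hpos
  set A' := A ∩ Sᶜ
  have hA' : MeasurableSet A' := hA.inter (hm _ hS.compl)
  have hposA' : 0 < μ {ω | 0 < condProb m μ A' ω} := by
    refine (pos_iff_ne_zero.2 hpos).trans_le (measure_mono_ae ?_)
    filter_upwards [condProb_inter hA hS.compl] with ω hω ⟨hωA, hωS⟩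
    show 0 < condProb m μ A' ω
    rwa [hω, indicator_of_mem hωS]
  obtain ⟨B', hB', hB'A', hB'pos⟩ := h A' hA' hposA'
  have hdisj : μ (S ∩ condSplitSet m μ A' B') = 0 := by
    rw [measure_eq_zero_iff_ae_notMem]
    filter_upwards [condProb_eq_zero_of_subset hA' hS.compl inter_subset_right]
      with ω hω ⟨hωS, hωpos, hωlt⟩
    linarith [hω (not_not_intro hωS)]
  have hgrow := calc
    μ S + μ (condSplitSet m μ A' B') = μ (S ∪ condSplitSet m μ A' B') := by
      rw [← measure_union_add_inter _ (hm _ measurableSet_condSplitSet), hdisj, add_zero]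
    _ ≤ μ (condSplitSet m μ A (B ∪ B')) :=
      measure_mono_ae (union_condSplitSet_ae_le hA hB hB' hS hBS hSB hB'A')
    _ ≤ μ S := hmax _ (hB.union hB') (union_subset hBA (hB'A'.trans inter_subset_left))
  exact (ENNReal.lt_add_right (measure_ne_top μ S) hB'pos.ne').not_ge hgrow

end

/-- `F₂` is atomless conditionally to `F₁` if and only if for every `A ∈ F₂` with
`P[E[1_A|F₁] > 0] > 0` there exists `B ∈ F₂`, `B ⊆ A`, such that
`P[0 < E[1_B|F₁] < E[1_A|F₁]] > 0`. -/
theorem stmt_1 {Ω : Type*} {m1 m2 : MeasurableSpace Ω} (hm : m1 ≤ m2)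
    (μ : @Measure Ω m2) [IsProbabilityMeasure μ] :
    CondAtomless m1 m2 μ ↔
      ∀ A : Set Ω, MeasurableSet[m2] A →
        0 < μ {ω | 0 < (μ[A.indicator (fun _ => (1 : ℝ)) | m1]) ω} →
        ∃ B : Set Ω, MeasurableSet[m2] B ∧ B ⊆ A ∧
          0 < μ {ω | 0 < (μ[B.indicator (fun _ => (1 : ℝ)) | m1]) ω ∧
            (μ[B.indicator (fun _ => (1 : ℝ)) | m1]) ω <
              (μ[A.indicator (fun _ => (1 : ℝ)) | m1]) ω} :=
  ⟨fun h _ hA hpos => h.exists_measure_condSplitSet_pos hA hpos,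
    condAtomless_of_forall_exists_measure_condSplitSet_pos hm⟩
end

section
/- Let (Ω, F₂, P) be a probability space and F₁ ⊂ F₂ a sub-σ-algebra. If there exists an atomless sub-σ-algebra B ⊂ F₂ that is independent of F₁, then F₂ is atomless conditionally to F₁. -/
open MeasureTheory

/-- A sub-σ-algebra `B` is atomless for `μ`: every `B`-measurable set of positive measure
contains a `B`-measurable subset of strictly smaller positive measure. -/
def SubSigmaAlgebraAtomless {Ω : Type*} (mB : MeasurableSpace Ω) {m2 : MeasurableSpace Ω}
    (μ : Measure Ω) : Prop :=
  ∀ B : Set Ω, MeasurableSet[mB] B → 0 < μ B →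
    ∃ B' : Set Ω, MeasurableSet[mB] B' ∧ B' ⊆ B ∧ 0 < μ B' ∧ μ B' < μ B

/-!
Fix `A` and write `g = P[A | F₁]`. Since `B` is atomless, for every `ε > 0` a greedy exhaustion
produces an increasing chain `∅ = C₀ ⊆ C₁ ⊆ ⋯` of `B`-sets with increments of measure at most `ε`
and complements of measure tending to `0`. By independence `P[C_{k+1} \ C_k | F₁] ≤ ε`, so
`k ↦ P[A ∩ C_k | F₁]` climbs from `0` towards `g` in steps of at most `ε`: its first positive value
lies in `(0, ε]`, hence strictly between `0` and `g` wherever `g > ε`. Letting `ε = 1/(n+1)` yields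
countably many `B`-sets `D_i` such that a.e. on `{g > 0}` some `P[A ∩ D_i | F₁]` lies in `(0, g)`.
Disjointing the `F₁`-sets where this happens gives a partition `(U_i)`, and `⋃ A ∩ D_i ∩ U_i` works
because conditional expectation is local on `F₁`-measurable sets.
-/

open Set Filter Topology ENNReal Function

theorem exists_mem_Ioc_of_le_add {α : Type*} [AddCommMonoid α] [LinearOrder α]
    [IsOrderedAddMonoid α] {x : ℕ → α} {ε : α} (h0 : x 0 ≤ 0)
    (hstep : ∀ k, x (k + 1) ≤ x k + ε) (hpos : ∃ k, 0 < x k) : ∃ k, x k ∈ Ioc 0 ε := by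
  classical
  obtain ⟨k, hk⟩ : ∃ k, Nat.find hpos = k + 1 :=
    Nat.exists_eq_succ_of_ne_zero fun h => (Nat.find_spec hpos).not_ge (h ▸ h0)
  have hxk : x k ≤ 0 := not_lt.1 (Nat.find_min hpos (hk ▸ k.lt_succ_self))
  refine ⟨k + 1, hk ▸ Nat.find_spec hpos, (hstep k).trans ?_⟩
  simpa using add_le_add_left hxk ε

namespace MeasureTheory.Measure

variable {α : Type*} {m : MeasurableSpace α}

theorem exists_subset_half_maximal (ν : Measure α) [IsFiniteMeasure ν] (R : Set α)
    (ε : ℝ≥0∞) : ∃ P, MeasurableSet P ∧ P ⊆ R ∧ ν P ≤ ε ∧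
      ∀ D, MeasurableSet D → D ⊆ R → ν D ≤ ε → ν D ≤ 2 * ν P := by
  set s := ⨆ D : {D : Set α // MeasurableSet D ∧ D ⊆ R ∧ ν D ≤ ε}, ν D.1
  suffices ∃ P, MeasurableSet P ∧ P ⊆ R ∧ ν P ≤ ε ∧ s ≤ 2 * ν P by
    obtain ⟨P, hP, hPR, hPε, hsP⟩ := this
    exact ⟨P, hP, hPR, hPε, fun D hD hDR hDε =>
      (le_iSup (fun D : {D : Set α // MeasurableSet D ∧ D ⊆ R ∧ ν D ≤ ε} => ν D.1)
        ⟨D, hD, hDR, hDε⟩).trans hsP⟩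
  by_cases hs : s = 0
  · exact ⟨∅, MeasurableSet.empty, empty_subset R, by simp, by simp [hs]⟩
  have hs_fin : s ≠ ∞ :=
    ne_top_of_le_ne_top (measure_ne_top ν univ) (iSup_le fun D => measure_mono (subset_univ _))
  obtain ⟨⟨P, hP, hPR, hPε⟩, hlt⟩ := lt_iSup_iff.1 (ENNReal.half_lt_self hs hs_fin)
  refine ⟨P, hP, hPR, hPε, ?_⟩
  rw [mul_comm, ← ENNReal.div_le_iff two_ne_zero ofNat_ne_top]
  exact hlt.le

end MeasureTheory.Measure

namespace SubSigmaAlgebraAtomless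

variable {α : Type*} {m : MeasurableSpace α} {ν : Measure α}

theorem exists_subset_two_mul_le (h : SubSigmaAlgebraAtomless m ν) {R : Set α}
    (hR : MeasurableSet R) (hpos : 0 < ν R) :
    ∃ D, MeasurableSet D ∧ D ⊆ R ∧ 0 < ν D ∧ 2 * ν D ≤ ν R := by
  obtain ⟨B, hB, hBR, hBpos, hBlt⟩ := h R hR hpos
  have hsum : ν B + ν (R \ B) = ν R := by
    simpa only [inter_eq_right.2 hBR] using measure_inter_add_sdiff R hB
  rcases le_total (ν B) (ν (R \ B)) with hle | hle
  · exact ⟨B, hB, hBR, hBpos, by rw [two_mul, ← hsum]; gcongr⟩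
  · refine ⟨R \ B, hR.diff hB, sdiff_subset, pos_iff_ne_zero.2 fun h0 => ?_, ?_⟩
    · exact hBlt.ne (by simpa [h0] using hsum)
    · rw [two_mul, ← hsum]; gcongr

theorem exists_subset_measure_le (h : SubSigmaAlgebraAtomless m ν) {R : Set α}
    (hR : MeasurableSet R) (hpos : 0 < ν R) {ε : ℝ≥0∞} (hε : 0 < ε) :
    ∃ D, MeasurableSet D ∧ D ⊆ R ∧ 0 < ν D ∧ ν D ≤ ε := by
  obtain ⟨R', hR', hR'R, hR'pos, hR'lt⟩ := h R hR hpos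
  have halving : ∀ n : ℕ, ∃ D, MeasurableSet D ∧ D ⊆ R' ∧ 0 < ν D ∧ 2 ^ n * ν D ≤ ν R' := by
    intro n
    induction n with
    | zero => exact ⟨R', hR', subset_rfl, hR'pos, by simp⟩
    | succ n ih =>
      obtain ⟨D, hD, hDR, hDpos, hDle⟩ := ih
      obtain ⟨D', hD', hD'D, hD'pos, hD'le⟩ := h.exists_subset_two_mul_le hD hDpos
      refine ⟨D', hD', hD'D.trans hDR, hD'pos, ?_⟩
      calc 2 ^ (n + 1) * ν D' = 2 ^ n * (2 * ν D') := by rw [pow_succ, mul_assoc]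
        _ ≤ 2 ^ n * ν D := by gcongr
        _ ≤ ν R' := hDle
  obtain ⟨n, hn⟩ := ENNReal.exists_nat_mul_gt hε.ne' hR'lt.ne_top
  obtain ⟨D, hD, hDR, hDpos, hDle⟩ := halving n
  refine ⟨D, hD, hDR.trans hR'R, hDpos, le_of_lt ?_⟩
  refine lt_of_mul_lt_mul_left' (a := (2 : ℝ≥0∞) ^ n) (hDle.trans_lt (hn.trans_le ?_))
  gcongr
  exact_mod_cast Nat.lt_two_pow_self.le

theorem exists_monotone_measure_sdiff_le (h : SubSigmaAlgebraAtomless m ν) [IsFiniteMeasure ν]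
    {ε : ℝ≥0∞} (hε : 0 < ε) :
    ∃ C : ℕ → Set α, (∀ j, MeasurableSet (C j)) ∧ Monotone C ∧ C 0 = ∅ ∧
      (∀ j, ν (C (j + 1) \ C j) ≤ ε) ∧ Tendsto (fun j => ν (C j)ᶜ) atTop (𝓝 0) := by
  choose P hPm hPR hPε hPmax using fun R => ν.exists_subset_half_maximal R ε
  set R : ℕ → Set α := fun n => (fun S => S \ P S)^[n] univ
  have hRsucc (n : ℕ) : R (n + 1) = R n \ P (R n) := iterate_succ_apply' _ _ _
  have hRm (n : ℕ) : MeasurableSet (R n) := by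
    induction n with
    | zero => exact MeasurableSet.univ
    | succ n ih => rw [hRsucc]; exact ih.diff (hPm _)
  have hRanti : Antitone R := antitone_nat_of_succ_le fun n => hRsucc n ▸ sdiff_subset
  -- The greedy choices are disjoint, so their measures are summable; an `ε`-small subset of
  -- positive measure left in every `R n` would give each of them at least half its measure.
  have hnull : ν (⋂ n, R n) = 0 := by
    by_contra hne
    obtain ⟨D, hD, hDR, hDpos, hDε⟩ :=
      h.exists_subset_measure_le (MeasurableSet.iInter hRm) (pos_iff_ne_zero.2 hne) hε
    have hdisj : Pairwise (Disjoint on fun n => P (R n)) := by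
      refine (pairwise_disjoint_on _).2 fun i j hij => ?_
      refine (disjoint_sdiff_right (s := P (R i)) (t := R i)).mono_right ((hPR _).trans ?_)
      exact (hRanti (Nat.succ_le_of_lt hij)).trans (hRsucc i).le
    have : ∞ ≤ ν univ :=
      calc ∞ = ∑' _ : ℕ, ν D / 2 :=
            (ENNReal.tsum_const_eq_top_of_ne_zero (ENNReal.div_pos hDpos.ne' ofNat_ne_top).ne').symm
        _ ≤ ∑' n, ν (P (R n)) := ENNReal.tsum_le_tsum fun n => ENNReal.div_le_of_le_mul <| by
            rw [mul_comm]; exact hPmax _ D hD (hDR.trans (iInter_subset _ n)) hDε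
        _ = ν (⋃ n, P (R n)) := (measure_iUnion hdisj fun n => hPm _).symm
        _ ≤ ν univ := measure_mono (subset_univ _)
    exact measure_ne_top ν univ (top_le_iff.1 this)
  refine ⟨fun n => (R n)ᶜ, fun n => (hRm n).compl,
    fun i j hij => compl_subset_compl.2 (hRanti hij), by simp [R], fun n => ?_, ?_⟩
  · refine (measure_mono fun ω hω => ?_).trans (hPε (R n))
    simp only [hRsucc, Set.mem_sdiff, mem_compl_iff, not_and, not_not] at hω
    tauto
  · simpa only [compl_compl, hnull, comp_def] using
      tendsto_measure_iInter_atTop (μ := ν) (fun n => (hRm n).nullMeasurableSet) hRanti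
        ⟨0, measure_ne_top _ _⟩

theorem trim {Ω : Type*} {mB m2 : MeasurableSpace Ω}
    {μ : Measure[m2] Ω} (h : SubSigmaAlgebraAtomless mB μ) (hmB : mB ≤ m2) :
    SubSigmaAlgebraAtomless mB (μ.trim hmB) := by
  intro B hB hpos
  rw [trim_measurableSet_eq hmB hB] at hpos ⊢
  obtain ⟨B', hB', hB'B, hB'pos, hB'lt⟩ := h B hB hpos
  rw [← trim_measurableSet_eq hmB hB'] at hB'pos hB'lt
  exact ⟨B', hB', hB'B, hB'pos, hB'lt⟩

end SubSigmaAlgebraAtomless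

open ProbabilityTheory

section CondExp

variable {Ω : Type*} {m1 m2 mB : MeasurableSpace Ω} {μ : Measure[m2] Ω} [IsFiniteMeasure μ]

theorem condExp_indicator_inter_le_of_indep (hm : m1 ≤ m2) (hmB : mB ≤ m2)
    (hindep : Indep mB m1 μ) {S D : Set Ω} (hS : MeasurableSet[m2] S)
    (hD : MeasurableSet[mB] D) :
    μ[(S ∩ D).indicator (fun _ => (1 : ℝ)) | m1] ≤ᵐ[μ] fun _ => μ.real D := by
  have hD2 : MeasurableSet[m2] D := hmB _ hD
  filter_upwards [condExp_mono (m := m1) ((integrable_const (1 : ℝ)).indicator (hS.inter hD2))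
      ((integrable_const (1 : ℝ)).indicator hD2)
      (Eventually.of_forall <|
        indicator_le_indicator_of_subset inter_subset_right fun _ => zero_le_one' ℝ),
    condExp_indep_eq hmB hm (f := D.indicator fun _ => (1 : ℝ))
      (stronglyMeasurable_const.indicator hD) hindep] with ω hle heq
  rw [heq] at hle
  simpa [integral_indicator_const _ hD2] using hle

theorem condExp_indicator_inter_le_add_of_indep (hm : m1 ≤ m2) (hmB : mB ≤ m2)
    (hindep : Indep mB m1 μ) {S D D' : Set Ω} (hS : MeasurableSet[m2] S)
    (hD : MeasurableSet[mB] D) (hD' : MeasurableSet[mB] D') (hDD' : D ⊆ D') :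
    ∀ᵐ ω ∂μ, μ[(S ∩ D').indicator (fun _ => (1 : ℝ)) | m1] ω ≤
      μ[(S ∩ D).indicator (fun _ => (1 : ℝ)) | m1] ω + μ.real (D' \ D) := by
  filter_upwards [condExp_sub (m := m1)
      ((integrable_const (1 : ℝ)).indicator (hS.inter (hmB _ hD')))
      ((integrable_const (1 : ℝ)).indicator (hS.inter (hmB _ hD))),
    condExp_indicator_inter_le_of_indep hm hmB hindep hS (hD'.diff hD)] with ω hsub hle
  rw [inter_sdiff_distrib_left, indicator_sdiff (inter_subset_inter_right S hDD'), hsub] at hle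
  simp only [Pi.sub_apply] at hle
  linarith

theorem condExp_indicator_iUnion_inter_ae_eq (hm : m1 ≤ m2) {ι : Type*} [Countable ι]
    {U : ι → Set Ω} (hU : ∀ i, MeasurableSet[m1] (U i)) (hdisj : Pairwise (Disjoint on U))
    {D : ι → Set Ω} (hD : ∀ i, MeasurableSet[m2] (D i)) (i : ι) :
    ∀ᵐ ω ∂μ, ω ∈ U i → μ[(⋃ j, D j ∩ U j).indicator (fun _ => (1 : ℝ)) | m1] ω =
      μ[(D i).indicator (fun _ => (1 : ℝ)) | m1] ω := by
  have hinter : U i ∩ ⋃ j, D j ∩ U j = U i ∩ D i := by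
    ext ω
    simp only [mem_inter_iff, mem_iUnion]
    refine ⟨fun ⟨hi, j, hj, hUj⟩ => ⟨hi, ?_⟩, fun ⟨hi, hDi⟩ => ⟨hi, i, hDi, hi⟩⟩
    obtain rfl : j = i := by_contra fun hji => disjoint_left.1 (hdisj hji) hUj hi
    exact hj
  have hB : MeasurableSet[m2] (⋃ j, D j ∩ U j) :=
    MeasurableSet.iUnion fun j => (hD j).inter (hm _ (hU j))
  filter_upwards [condExp_indicator ((integrable_const (1 : ℝ)).indicator hB) (hU i),
    condExp_indicator ((integrable_const (1 : ℝ)).indicator (hD i)) (hU i)] with ω hBω hDω hω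
  rw [indicator_indicator, hinter, ← indicator_indicator] at hBω
  simpa [indicator_of_mem hω] using hBω.symm.trans hDω

theorem exists_seq_condExp_indicator_inter_mem_Ioo (hm : m1 ≤ m2) (hmB : mB ≤ m2)
    (hatomless : SubSigmaAlgebraAtomless mB μ) (hindep : Indep mB m1 μ) {A : Set Ω}
    (hA : MeasurableSet[m2] A) :
    ∃ D : ℕ → Set Ω, (∀ i, MeasurableSet[mB] (D i)) ∧ ∀ᵐ ω ∂μ,
      0 < μ[A.indicator (fun _ => (1 : ℝ)) | m1] ω → ∃ i,
        μ[(A ∩ D i).indicator (fun _ => (1 : ℝ)) | m1] ω ∈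
          Ioo 0 (μ[A.indicator (fun _ => (1 : ℝ)) | m1] ω) := by
  have hε (n : ℕ) : 0 < ENNReal.ofReal (1 / (n + 1)) :=
    ENNReal.ofReal_pos.2 Nat.one_div_pos_of_nat
  choose C hCm hCmono hC0 hCstep hCtail using
    fun n => (hatomless.trim hmB).exists_monotone_measure_sdiff_le (hε n)
  have hstep (n k : ℕ) : ∀ᵐ ω ∂μ, μ[(A ∩ C n (k + 1)).indicator (fun _ => (1 : ℝ)) | m1] ω ≤
      μ[(A ∩ C n k).indicator (fun _ => (1 : ℝ)) | m1] ω + 1 / (n + 1) := by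
    filter_upwards [condExp_indicator_inter_le_add_of_indep hm hmB hindep hA (hCm n k)
      (hCm n (k + 1)) (hCmono n k.le_succ)] with ω hω
    refine hω.trans (add_le_add_right ?_ _)
    rw [measureReal_def, ← trim_measurableSet_eq hmB ((hCm n (k + 1)).diff (hCm n k))]
    exact ENNReal.toReal_le_of_le_ofReal (by positivity) (hCstep n k)
  have htail (n k : ℕ) : ∀ᵐ ω ∂μ, μ[A.indicator (fun _ => (1 : ℝ)) | m1] ω ≤
      μ[(A ∩ C n k).indicator (fun _ => (1 : ℝ)) | m1] ω + μ.real (C n k)ᶜ := by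
    simpa only [inter_univ, ← compl_eq_univ_sdiff] using
      condExp_indicator_inter_le_add_of_indep hm hmB hindep hA (hCm n k) MeasurableSet.univ
        (subset_univ _)
  have htend (n : ℕ) : Tendsto (fun k => μ.real (C n k)ᶜ) atTop (𝓝 0) := by
    simpa only [measureReal_def, ← trim_measurableSet_eq hmB (hCm n _).compl, comp_def,
      ENNReal.toReal_zero] using
      (ENNReal.tendsto_toReal zero_ne_top).comp (hCtail n)
  refine ⟨fun i => C i.unpair.1 i.unpair.2, fun i => hCm _ _, ?_⟩
  filter_upwards [ae_all_iff.2 fun n => ae_all_iff.2 (hstep n),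
    ae_all_iff.2 fun n => ae_all_iff.2 (htail n)] with ω hstep htail hpos
  obtain ⟨n, hn⟩ := exists_nat_one_div_lt hpos
  obtain ⟨j, hj⟩ := ((htend n).eventually (gt_mem_nhds hpos)).exists
  obtain ⟨k, hk⟩ := exists_mem_Ioc_of_le_add
    (x := fun k => μ[(A ∩ C n k).indicator (fun _ => (1 : ℝ)) | m1] ω)
    (by simp [hC0]) (hstep n) ⟨j, by linarith [htail n j]⟩
  exact ⟨Nat.pair n k, by simpa only [Nat.unpair_pair] using ⟨hk.1, hk.2.trans_lt hn⟩⟩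

end CondExp

/-- If there exists an atomless sub-σ-algebra `B ⊆ F₂` that is independent of `F₁`,
then `F₂` is atomless conditionally to `F₁`. -/
theorem stmt_3 {Ω : Type*} {m1 m2 : MeasurableSpace Ω} (hm : m1 ≤ m2)
    (μ : @Measure Ω m2) [IsProbabilityMeasure μ] (mB : MeasurableSpace Ω)
    (hmB : mB ≤ m2) (hatomless : SubSigmaAlgebraAtomless mB μ)
    (hindep : ProbabilityTheory.Indep mB m1 μ) :
    CondAtomless m1 m2 μ := by
  intro A hA
  obtain ⟨D, hD, hmem⟩ := exists_seq_condExp_indicator_inter_mem_Ioo hm hmB hatomless hindep hA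
  set V : ℕ → Set Ω := fun i => {ω | μ[(A ∩ D i).indicator (fun _ => (1 : ℝ)) | m1] ω ∈
    Ioo 0 (μ[A.indicator (fun _ => (1 : ℝ)) | m1] ω)}
  have hV (i : ℕ) : MeasurableSet[m1] (V i) := by
    simp only [V, mem_Ioo, ofPred_and]
    exact (measurableSet_lt measurable_const stronglyMeasurable_condExp.measurable).inter
      (measurableSet_lt stronglyMeasurable_condExp.measurable stronglyMeasurable_condExp.measurable)
  have hU := MeasurableSet.disjointed hV
  refine ⟨⋃ i, (A ∩ D i) ∩ disjointed V i,
    MeasurableSet.iUnion fun i => (hA.inter (hmB _ (hD i))).inter (hm _ (hU i)),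
    iUnion_subset fun i => inter_subset_left.trans inter_subset_left, ?_⟩
  filter_upwards [hmem, ae_all_iff.2 (condExp_indicator_iUnion_inter_ae_eq hm hU
    (disjoint_disjointed V) fun i => hA.inter (hmB _ (hD i)))] with ω hω hglue hpos
  obtain ⟨i, hi⟩ : ∃ i, ω ∈ disjointed V i := by
    rw [← mem_iUnion, iUnion_disjointed]
    exact mem_iUnion.2 (hω hpos)
  rw [hglue i hi]
  exact disjointed_subset V i hi
end

section
/- Suppose F₂ is atomless conditionally to F₁. Let A ∈ F₁ and let C ∈ F₂ with C ⊂ A be such that E[1_C | F₁] > 0 almost surely on A. Then there exists a decreasing sequence of F₂-measurable sets (B_n)_{n ≥ 0} with B_n ⊂ C such that for each n, 0 < E[1_{B_n} | F₁] ≤ 2^{−n} almost surely on A. -/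
open MeasureTheory

/-!
Conditional atomlessness gives, for every `B`, a subset `B'` with
`0 < E[1_{B'} | F₁] < E[1_B | F₁]` on `{E[1_B | F₁] > 0}`. Taking `B'` where
`E[1_{B'} | F₁] ≤ E[1_B | F₁] / 2` and `B \ B'` elsewhere (an `F₁`-measurable choice, so it commutes
with the conditional expectation) yields a subset whose conditional probability is positive and at
most half that of `B`. Iterating this halving from `C` gives `B_n` with
`0 < E[1_{B_n} | F₁] ≤ 2^{-n} E[1_C | F₁] ≤ 2^{-n}` wherever `E[1_C | F₁] > 0`.
-/

section CondExpIndicator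

variable {Ω : Type*} {m m₀ : MeasurableSpace Ω} {μ : @Measure Ω m₀} {f : Ω → ℝ}

theorem condExp_indicator_sdiff {s t : Set Ω} (hs : MeasurableSet[m₀] s)
    (ht : MeasurableSet[m₀] t) (hst : s ⊆ t) (hf : Integrable f μ) :
    μ[(t \ s).indicator f | m] =ᵐ[μ] μ[t.indicator f | m] - μ[s.indicator f | m] := by
  rw [Set.indicator_sdiff hst]
  exact condExp_sub (hf.indicator ht) (hf.indicator hs) m

theorem condExp_indicator_ite (hm : m ≤ m₀) {S s t : Set Ω} [DecidablePred (· ∈ S)]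
    (hS : MeasurableSet[m] S) (hs : MeasurableSet[m₀] s) (ht : MeasurableSet[m₀] t)
    (hf : Integrable f μ) :
    μ[(S.ite s t).indicator f | m] =ᵐ[μ]
      S.piecewise (μ[s.indicator f | m]) (μ[t.indicator f | m]) := by
  have hite : (S.ite s t).indicator f =
      S.indicator (s.indicator f) + Sᶜ.indicator (t.indicator f) := by
    ext ω
    classical
    by_cases hω : ω ∈ S <;> simp [Set.ite, Set.indicator_apply, hω]
  rw [hite, ← Set.indicator_add_compl_eq_piecewise]
  exact (condExp_add ((hf.indicator hs).indicator (hm _ hS))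
    ((hf.indicator ht).indicator (hm _ hS.compl)) m).trans
    ((condExp_indicator (hf.indicator hs) hS).add (condExp_indicator (hf.indicator ht) hS.compl))

theorem condExp_indicator_one_le_one [IsFiniteMeasure μ] (hm : m ≤ m₀) {s : Set Ω}
    (hs : MeasurableSet[m₀] s) :
    μ[s.indicator (fun _ => (1 : ℝ)) | m] ≤ᵐ[μ] fun _ => 1 := by
  have hle := condExp_mono (m := m) ((integrable_const (μ := μ) (1 : ℝ)).indicator hs)
    (integrable_const (1 : ℝ)) (.of_forall (Set.indicator_le_self' fun _ _ => zero_le_one))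
  rwa [condExp_const hm] at hle

end CondExpIndicator

namespace CondAtomless

variable {Ω : Type*} {m1 m2 : MeasurableSpace Ω} {μ : @Measure Ω m2} [IsFiniteMeasure μ]

theorem exists_subset_condExp_le_half (hca : CondAtomless m1 m2 μ) (hm : m1 ≤ m2) {B : Set Ω}
    (hB : MeasurableSet[m2] B) :
    ∃ D, MeasurableSet[m2] D ∧ D ⊆ B ∧
      ∀ᵐ ω ∂μ, 0 < (μ[B.indicator (fun _ => (1 : ℝ)) | m1]) ω →
        0 < (μ[D.indicator (fun _ => (1 : ℝ)) | m1]) ω ∧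
        (μ[D.indicator (fun _ => (1 : ℝ)) | m1]) ω ≤
          (μ[B.indicator (fun _ => (1 : ℝ)) | m1]) ω / 2 := by
  classical
  obtain ⟨B', hB', hB'B, hB'ae⟩ := hca B hB
  set f := μ[B.indicator (fun _ => (1 : ℝ)) | m1]
  set g := μ[B'.indicator (fun _ => (1 : ℝ)) | m1]
  set S := {ω | g ω ≤ f ω / 2}
  have hS : MeasurableSet[m1] S :=
    measurableSet_le stronglyMeasurable_condExp.measurable
      (stronglyMeasurable_condExp.measurable.div_const 2)
  refine ⟨S.ite B' (B \ B'), (hB'.inter (hm _ hS)).union ((hB.diff hB').diff (hm _ hS)),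
    Set.union_subset (Set.inter_subset_left.trans hB'B) (Set.sdiff_subset.trans Set.sdiff_subset),
    ?_⟩
  have h1 : Integrable (fun _ => (1 : ℝ)) μ := integrable_const 1
  filter_upwards [hB'ae, condExp_indicator_ite hm hS hB' (hB.diff hB') h1,
    condExp_indicator_sdiff hB' hB hB'B h1] with ω hω hite hsdiff hfpos
  obtain ⟨hgpos, hgf⟩ := hω hfpos
  rw [hite]
  by_cases hωS : ω ∈ S
  · rw [Set.piecewise_eq_of_mem _ _ _ hωS]
    exact ⟨hgpos, hωS⟩
  · have hfg : f ω / 2 < g ω := not_le.mp hωS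
    rw [Set.piecewise_eq_of_notMem _ _ _ hωS, hsdiff, Pi.sub_apply]
    constructor <;> linarith

theorem exists_antitone_condExp_le_div_pow (hca : CondAtomless m1 m2 μ) (hm : m1 ≤ m2)
    {C : Set Ω} (hC : MeasurableSet[m2] C) :
    ∃ B : ℕ → Set Ω, B 0 = C ∧ Antitone B ∧ (∀ n, MeasurableSet[m2] (B n)) ∧
      ∀ n, ∀ᵐ ω ∂μ, 0 < (μ[C.indicator (fun _ => (1 : ℝ)) | m1]) ω →
        0 < (μ[(B n).indicator (fun _ => (1 : ℝ)) | m1]) ω ∧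
        (μ[(B n).indicator (fun _ => (1 : ℝ)) | m1]) ω ≤
          (μ[C.indicator (fun _ => (1 : ℝ)) | m1]) ω / 2 ^ n := by
  choose D hD hDB hDae using fun B : {s : Set Ω // MeasurableSet[m2] s} =>
    hca.exists_subset_condExp_le_half hm B.2
  let halve : {s : Set Ω // MeasurableSet[m2] s} → {s : Set Ω // MeasurableSet[m2] s} :=
    fun B => ⟨D B, hD B⟩
  have hsucc (n : ℕ) : halve^[n + 1] ⟨C, hC⟩ = halve (halve^[n] ⟨C, hC⟩) :=
    Function.iterate_succ_apply' halve n _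
  refine ⟨fun n => (halve^[n] ⟨C, hC⟩).1, rfl,
    antitone_nat_of_succ_le fun n => (hsucc n).symm ▸ hDB _, fun n => (halve^[n] ⟨C, hC⟩).2,
    fun n => ?_⟩
  induction n with
  | zero => exact .of_forall fun ω hω => ⟨hω, by simp⟩
  | succ n ih =>
    filter_upwards [ih, hDae (halve^[n] ⟨C, hC⟩)] with ω hωn hhalf hpos
    obtain ⟨hposn, hlen⟩ := hωn hpos
    obtain ⟨hpos', hle'⟩ := hhalf hposn
    simp only [hsucc]
    refine ⟨hpos', hle'.trans ?_⟩
    rw [pow_succ, ← div_div]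
    linarith

end CondAtomless

theorem stmt_4_general {Ω : Type*} {m1 m2 : MeasurableSpace Ω} (hm : m1 ≤ m2)
    (μ : @Measure Ω m2) [IsProbabilityMeasure μ]
    (hca : CondAtomless m1 m2 μ)
    (A C : Set Ω) (hC : MeasurableSet[m2] C)
    (hCpos : ∀ᵐ ω ∂μ, ω ∈ A → 0 < (μ[C.indicator (fun _ => (1 : ℝ)) | m1]) ω) :
    ∃ B : ℕ → Set Ω, (∀ n, MeasurableSet[m2] (B n)) ∧ (∀ n, B (n + 1) ⊆ B n) ∧
      (∀ n, B n ⊆ C) ∧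
      ∀ n, ∀ᵐ ω ∂μ, ω ∈ A →
        0 < (μ[(B n).indicator (fun _ => (1 : ℝ)) | m1]) ω ∧
        (μ[(B n).indicator (fun _ => (1 : ℝ)) | m1]) ω ≤ (2 : ℝ) ^ (-(n : ℝ)) := by
  obtain ⟨B, hB0, hanti, hmeas, hbound⟩ := hca.exists_antitone_condExp_le_div_pow hm hC
  refine ⟨B, hmeas, fun n => hanti n.le_succ, fun n => hB0 ▸ hanti (Nat.zero_le n), fun n => ?_⟩
  filter_upwards [hCpos, hbound n, condExp_indicator_one_le_one hm hC] with ω hCω hBω hle1 hωA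
  obtain ⟨hpos, hle⟩ := hBω (hCω hωA)
  refine ⟨hpos, hle.trans ?_⟩
  rw [Real.rpow_neg zero_le_two, Real.rpow_natCast, ← one_div]
  gcongr

/-- If `F₂` is atomless conditionally to `F₁`, `A ∈ F₁` and `C ∈ F₂`, `C ⊆ A`, is such that
`E[1_C | F₁] > 0` a.s. on `A`, then there is a decreasing sequence `(B_n)` of `F₂`-measurable
subsets of `C` with `0 < E[1_{B_n} | F₁] ≤ 2^{-n}` a.s. on `A`. -/
theorem stmt_4 {Ω : Type*} {m1 m2 : MeasurableSpace Ω} (hm : m1 ≤ m2)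
    (μ : @Measure Ω m2) [IsProbabilityMeasure μ]
    (hca : CondAtomless m1 m2 μ)
    (A C : Set Ω) (hA : MeasurableSet[m1] A) (hC : MeasurableSet[m2] C) (hCA : C ⊆ A)
    (hCpos : ∀ᵐ ω ∂μ, ω ∈ A → 0 < (μ[C.indicator (fun _ => (1 : ℝ)) | m1]) ω) :
    ∃ B : ℕ → Set Ω, (∀ n, MeasurableSet[m2] (B n)) ∧ (∀ n, B (n + 1) ⊆ B n) ∧
      (∀ n, B n ⊆ C) ∧
      ∀ n, ∀ᵐ ω ∂μ, ω ∈ A →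
        0 < (μ[(B n).indicator (fun _ => (1 : ℝ)) | m1]) ω ∧
        (μ[(B n).indicator (fun _ => (1 : ℝ)) | m1]) ω ≤ (2 : ℝ) ^ (-(n : ℝ)) :=
  stmt_4_general hm μ hca A C hC hCpos
end

section
/- Suppose F₂ is atomless conditionally to F₁. Then there exists an increasing family of F₂-measurable sets (B_t)_{t ∈ [0,1]} such that E[1_{B_t} | F₁] = t almost surely for every t ∈ [0,1]; the σ-algebra B generated by the family (B_t)_t is independent of F₁; and there exists an F₂-measurable random variable U, uniformly distributed on [0, 1] and independent of F₁, such that B_t = {U ≤ t} up to null sets for every t. -/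
/-!
By an exhaustion argument, atomlessness gives for every `A ∈ F₂` some `B ⊆ A` in `F₂` with
`E[1_B | F₁] = E[1_A | F₁] / 2`. Halving repeatedly yields sets `B_{k/2ⁿ}`, increasing in
`k/2ⁿ`, with `E[1_{B_{k/2ⁿ}} | F₁] = k/2ⁿ`; then `B_t = ⋃ₙ B_{⌊2ⁿt⌋/2ⁿ}` and
`U = inf {t | ω ∈ B_t}`. Since each `B_t` has the constant conditional probability `t`,
`P(B_t ∩ G) = t P(G)` for all `G ∈ F₁`, which gives the independence of the `B_t` and of `U`
from `F₁`.
-/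

open MeasureTheory

open ProbabilityTheory Set Filter
open scoped ENNReal Topology

section CondProb

variable {Ω : Type*} {m1 m2 : MeasurableSpace Ω} {μ : @Measure Ω m2} {A C : Set Ω}

lemma integrable_indicator_one [IsFiniteMeasure μ] (hA : MeasurableSet[m2] A) :
    Integrable (A.indicator fun _ => (1 : ℝ)) μ :=
  (integrable_const 1).indicator hA

lemma condProb_nonneg : 0 ≤ᵐ[μ] μ⟦A | m1⟧ :=
  condExp_nonneg (.of_forall fun _ => indicator_nonneg (fun _ _ => zero_le_one) _)

lemma condProb_le_one (hm : m1 ≤ m2) [IsFiniteMeasure μ] (hA : MeasurableSet[m2] A) :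
    μ⟦A | m1⟧ ≤ᵐ[μ] fun _ => 1 := by
  calc μ⟦A | m1⟧ ≤ᵐ[μ] μ[fun _ => (1 : ℝ) | m1] :=
        condExp_mono (integrable_indicator_one hA) (integrable_const 1)
          (.of_forall fun _ => indicator_le_self' (fun _ _ => zero_le_one) _)
    _ = fun _ => 1 := condExp_const hm 1

lemma condProb_empty_s6 : μ⟦(∅ : Set Ω) | m1⟧ = 0 := by
  rw [indicator_empty]; exact condExp_zero

lemma condProb_univ (hm : m1 ≤ m2) [IsFiniteMeasure μ] :
    μ⟦(univ : Set Ω) | m1⟧ = fun _ => 1 := by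
  rw [indicator_univ]; exact condExp_const hm 1

lemma condProb_union_s6 [IsFiniteMeasure μ] (hA : MeasurableSet[m2] A) (hC : MeasurableSet[m2] C)
    (hAC : Disjoint A C) : μ⟦A ∪ C | m1⟧ =ᵐ[μ] μ⟦A | m1⟧ + μ⟦C | m1⟧ := by
  rw [indicator_union_of_disjoint hAC]
  exact condExp_add (integrable_indicator_one hA) (integrable_indicator_one hC) m1

lemma condProb_diff [IsFiniteMeasure μ] (hA : MeasurableSet[m2] A) (hC : MeasurableSet[m2] C)
    (hCA : C ⊆ A) : μ⟦A \ C | m1⟧ =ᵐ[μ] μ⟦A | m1⟧ - μ⟦C | m1⟧ := by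
  have h := condProb_union_s6 (m1 := m1) (μ := μ) hC (hA.diff hC) disjoint_sdiff_right
  rw [union_sdiff_cancel hCA] at h
  filter_upwards [h] with ω hω
  simp only [Pi.sub_apply, Pi.add_apply] at hω ⊢
  linarith

lemma condProb_congr_ae (h : A =ᵐ[μ] C) : μ⟦A | m1⟧ =ᵐ[μ] μ⟦C | m1⟧ :=
  condExp_congr_ae (indicator_ae_eq_of_ae_eq_set h)

lemma condProb_mono [IsFiniteMeasure μ] (hA : MeasurableSet[m2] A) (hC : MeasurableSet[m2] C)
    (hAC : A ⊆ C) : μ⟦A | m1⟧ ≤ᵐ[μ] μ⟦C | m1⟧ :=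
  condExp_mono (integrable_indicator_one hA) (integrable_indicator_one hC)
    (.of_forall fun _ => indicator_le_indicator_of_subset hAC (fun _ => zero_le_one) _)

lemma condProb_inter_of_measurableSet_right [IsFiniteMeasure μ] {H : Set Ω}
    (hC : MeasurableSet[m2] C) (hH : MeasurableSet[m1] H) :
    μ⟦C ∩ H | m1⟧ =ᵐ[μ] H.indicator (μ⟦C | m1⟧) := by
  rw [inter_comm, ← indicator_indicator]
  exact condExp_indicator (integrable_indicator_one hC) hH

lemma setIntegral_condProb (hm : m1 ≤ m2) [IsFiniteMeasure μ] {G : Set Ω}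
    (hA : MeasurableSet[m2] A) (hG : MeasurableSet[m1] G) :
    ∫ ω in G, (μ⟦A | m1⟧) ω ∂μ = μ.real (A ∩ G) := by
  rw [setIntegral_condExp hm (integrable_indicator_one hA) hG, integral_indicator hA,
    setIntegral_const, smul_eq_mul, mul_one, measureReal_restrict_apply hA]

lemma ae_le_of_forall_setIntegral_le_of_stronglyMeasurable (hm : m1 ≤ m2) {f g : Ω → ℝ}
    (hf : StronglyMeasurable[m1] f) (hg : StronglyMeasurable[m1] g) (hfi : Integrable f μ)
    (hgi : Integrable g μ)
    (hle : ∀ s, MeasurableSet[m1] s → ∫ ω in s, f ω ∂μ ≤ ∫ ω in s, g ω ∂μ) : f ≤ᵐ[μ] g :=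
  ae_le_of_ae_le_trim <| ae_le_of_forall_setIntegral_le (hfi.trim hm hf) (hgi.trim hm hg)
    fun s hs _ => by
      rw [← setIntegral_trim hm hf hs, ← setIntegral_trim hm hg hs]
      exact hle s hs

lemma condProb_iUnion_le (hm : m1 ≤ m2) [IsFiniteMeasure μ] {f : ℕ → Set Ω}
    (hf : ∀ n, MeasurableSet[m2] (f n)) (hmono : Monotone f) {g : Ω → ℝ}
    (hg : StronglyMeasurable[m1] g) (hgi : Integrable g μ) (hle : ∀ n, μ⟦f n | m1⟧ ≤ᵐ[μ] g) :
    μ⟦⋃ n, f n | m1⟧ ≤ᵐ[μ] g := by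
  refine ae_le_of_forall_setIntegral_le_of_stronglyMeasurable hm stronglyMeasurable_condExp hg
    integrable_condExp hgi fun s hs => ?_
  have hlim : Tendsto (fun n => μ.real (f n ∩ s)) atTop (𝓝 (μ.real ((⋃ n, f n) ∩ s))) := by
    rw [iUnion_inter]
    exact (ENNReal.tendsto_toReal (measure_ne_top μ _)).comp
      (tendsto_measure_iUnion_atTop fun a b hab => inter_subset_inter_left s (hmono hab))
  rw [setIntegral_condProb hm (MeasurableSet.iUnion hf) hs]
  refine le_of_tendsto hlim (.of_forall fun n => ?_)
  rw [← setIntegral_condProb hm (hf n) hs]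
  exact setIntegral_mono_ae integrable_condExp.restrict hgi.restrict (hle n)

lemma measure_inter_ne_zero_of_condProb_pos (hm : m1 ≤ m2) [IsFiniteMeasure μ] {G : Set Ω}
    (hC : MeasurableSet[m2] C) (hG : MeasurableSet[m1] G) (hG0 : μ G ≠ 0)
    (hpos : ∀ᵐ ω ∂μ, ω ∈ G → 0 < (μ⟦C | m1⟧) ω) : μ (C ∩ G) ≠ 0 := by
  intro hCG
  have hzero : μ⟦C | m1⟧ =ᵐ[μ.restrict G] 0 := by
    refine (setIntegral_eq_zero_iff_of_nonneg_ae (ae_restrict_of_ae condProb_nonneg)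
      integrable_condExp.integrableOn).mp ?_
    rw [setIntegral_condProb hm hC hG, measureReal_def, hCG, ENNReal.toReal_zero]
  have hfalse : ∀ᵐ ω ∂μ.restrict G, False := by
    filter_upwards [hzero, (ae_restrict_iff' (hm _ hG)).mpr hpos] with ω h0 hp
    exact (h0 ▸ hp).false
  exact hG0 (by simpa using ae_iff.mp hfalse)

lemma measureReal_inter_of_condProb_ae_eq_const (hm : m1 ≤ m2) [IsFiniteMeasure μ] {G : Set Ω}
    {c : ℝ} (hA : MeasurableSet[m2] A) (hG : MeasurableSet[m1] G)
    (hc : μ⟦A | m1⟧ =ᵐ[μ] fun _ => c) : μ.real (A ∩ G) = c * μ.real G := by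
  rw [← setIntegral_condProb hm hA hG, setIntegral_congr_ae (hm _ hG) (hc.mono fun _ h _ => h),
    setIntegral_const, smul_eq_mul, mul_comm]

lemma measureReal_eq_of_condProb_ae_eq_const (hm : m1 ≤ m2) [IsProbabilityMeasure μ] {c : ℝ}
    (hA : MeasurableSet[m2] A) (hc : μ⟦A | m1⟧ =ᵐ[μ] fun _ => c) : μ.real A = c := by
  have h := measureReal_inter_of_condProb_ae_eq_const hm hA (@MeasurableSet.univ Ω m1) hc
  rwa [inter_univ, probReal_univ, mul_one] at h

theorem indep_generateFrom_of_condProb_ae_eq_const (hm : m1 ≤ m2) [IsProbabilityMeasure μ]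
    {p : Set (Set Ω)} (hp : IsPiSystem p) (hpm : ∀ s ∈ p, MeasurableSet[m2] s)
    (hc : ∀ s ∈ p, ∃ c : ℝ, μ⟦s | m1⟧ =ᵐ[μ] fun _ => c) :
    Indep (MeasurableSpace.generateFrom p) m1 μ := by
  refine IndepSets.indep (MeasurableSpace.generateFrom_le hpm) hm hp
    (@MeasurableSpace.isPiSystem_measurableSet Ω m1) rfl
    (@MeasurableSpace.generateFrom_measurableSet Ω m1).symm ((IndepSets_iff _ _ _).mpr ?_)
  intro s G hs hG
  obtain ⟨c, hsc⟩ := hc s hs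
  have hinter := measureReal_inter_of_condProb_ae_eq_const hm (hpm s hs) hG hsc
  rw [← measureReal_eq_of_condProb_ae_eq_const hm (hpm s hs) hsc] at hinter
  refine (ENNReal.toReal_eq_toReal_iff' (measure_ne_top μ _)
    (ENNReal.mul_ne_top (measure_ne_top μ _) (measure_ne_top μ _))).mp ?_
  rwa [ENNReal.toReal_mul]

end CondProb

theorem exists_ae_maximal_of_iUnion_mem {Ω : Type*} {m : MeasurableSpace Ω} {μ : Measure Ω}
    [IsFiniteMeasure μ] {𝒟 : Set (Set Ω)} (h𝒟 : ∀ B ∈ 𝒟, MeasurableSet B) (hempty : ∅ ∈ 𝒟)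
    (hunion : ∀ f : ℕ → Set Ω, Monotone f → (∀ n, f n ∈ 𝒟) → ⋃ n, f n ∈ 𝒟) :
    ∃ T ∈ 𝒟, ∀ C ∈ 𝒟, T ⊆ C → μ (C \ T) = 0 := by
  have hstep : ∀ (n : ℕ) (B : Set Ω), ∃ C, B ∈ 𝒟 → C ∈ 𝒟 ∧ B ⊆ C ∧
      ∀ C' ∈ 𝒟, B ⊆ C' → μ.real C' ≤ μ.real C + 1 / (n + 1) := by
    intro n B
    by_cases hB : B ∈ 𝒟
    · set S := μ.real '' {C | C ∈ 𝒟 ∧ B ⊆ C}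
      have hbdd : BddAbove S := ⟨μ.real univ, by
        rintro _ ⟨C, -, rfl⟩; exact measureReal_mono (subset_univ C)⟩
      have hne : S.Nonempty := ⟨_, B, ⟨hB, subset_rfl⟩, rfl⟩
      obtain ⟨_, ⟨C, ⟨hC, hBC⟩, rfl⟩, hlt⟩ :=
        exists_lt_of_lt_csSup hne (sub_lt_self (sSup S) (Nat.one_div_pos_of_nat (n := n)))
      refine ⟨C, fun _ => ⟨hC, hBC, fun C' hC' hBC' => ?_⟩⟩
      have := le_csSup hbdd ⟨C', ⟨hC', hBC'⟩, rfl⟩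
      linarith
    · exact ⟨B, fun h => absurd h hB⟩
  choose F hF using hstep
  let seq : ℕ → Set Ω := fun n => Nat.rec ∅ F n
  have hseq : ∀ n, seq n ∈ 𝒟 := fun n => by
    induction n with
    | zero => exact hempty
    | succ n ih => exact (hF n _ ih).1
  have hmono : Monotone seq := monotone_nat_of_le_succ fun n => (hF n _ (hseq n)).2.1
  refine ⟨⋃ n, seq n, hunion seq hmono hseq, fun C hC hTC => ?_⟩
  have hle : μ.real C ≤ μ.real (⋃ n, seq n) := by
    have hlim : Tendsto (fun n : ℕ => μ.real (⋃ n, seq n) + 1 / ((n : ℝ) + 1)) atTop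
        (𝓝 (μ.real (⋃ n, seq n))) := by
      simpa using tendsto_one_div_add_atTop_nhds_zero_nat.const_add (μ.real (⋃ n, seq n))
    refine ge_of_tendsto' hlim fun n => ?_
    calc μ.real C ≤ μ.real (seq (n + 1)) + 1 / (n + 1) :=
          (hF n _ (hseq n)).2.2 C hC ((subset_iUnion seq n).trans hTC)
      _ ≤ μ.real (⋃ n, seq n) + 1 / (n + 1) := by
          linarith [measureReal_mono (μ := μ) (subset_iUnion seq (n + 1))]
  have hdiff : μ.real (C \ ⋃ n, seq n) = 0 := by
    rw [measureReal_sdiff hTC (h𝒟 _ (hunion seq hmono hseq))]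
    linarith [measureReal_mono (μ := μ) hTC]
  exact (measureReal_eq_zero_iff (measure_ne_top μ _)).mp hdiff

namespace CondAtomless

variable {Ω : Type*} {m1 m2 : MeasurableSpace Ω} {μ : @Measure Ω m2} [IsFiniteMeasure μ]
  {A C : Set Ω}

lemma exists_subset_condProb_le_half (hm : m1 ≤ m2) (hca : CondAtomless m1 m2 μ)
    (hC : MeasurableSet[m2] C) :
    ∃ C', MeasurableSet[m2] C' ∧ C' ⊆ C ∧ ∀ᵐ ω ∂μ, 0 < (μ⟦C | m1⟧) ω →
      0 < (μ⟦C' | m1⟧) ω ∧ (μ⟦C' | m1⟧) ω ≤ (μ⟦C | m1⟧) ω / 2 := by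
  obtain ⟨B, hB, hBC, hBae⟩ := hca C hC
  -- take `B` on `H` and `C \ B` off `H`: whichever of the two is at most half of `C`
  set H : Set Ω := {ω | (μ⟦B | m1⟧) ω ≤ (μ⟦C | m1⟧) ω / 2}
  have hH : MeasurableSet[m1] H :=
    measurableSet_le stronglyMeasurable_condExp.measurable
      (stronglyMeasurable_condExp.measurable.div_const 2)
  refine ⟨B ∩ H ∪ (C \ B) ∩ Hᶜ,
    (hB.inter (hm _ hH)).union ((hC.diff hB).inter (hm _ hH.compl)),
    union_subset (inter_subset_left.trans hBC) (inter_subset_left.trans sdiff_subset), ?_⟩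
  filter_upwards [hBae, condProb_union_s6 (m1 := m1) (hB.inter (hm _ hH))
      ((hC.diff hB).inter (hm _ hH.compl))
      (disjoint_sdiff_right.mono inter_subset_left inter_subset_left),
    condProb_inter_of_measurableSet_right hB hH,
    condProb_inter_of_measurableSet_right (hC.diff hB) hH.compl,
    condProb_diff (m1 := m1) hC hB hBC] with ω hBω hunion hBH hCBH hdiff hCpos
  obtain ⟨hBpos, hBlt⟩ := hBω hCpos
  simp only [Pi.add_apply, Pi.sub_apply] at hunion hdiff
  rw [hunion, hBH, hCBH]
  by_cases hω : ω ∈ H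
  · have hω' : (μ⟦B | m1⟧) ω ≤ (μ⟦C | m1⟧) ω / 2 := hω
    rw [indicator_of_mem hω, indicator_of_notMem (notMem_compl_iff.mpr hω)]
    constructor <;> linarith
  · have hω' : ¬ (μ⟦B | m1⟧) ω ≤ (μ⟦C | m1⟧) ω / 2 := hω
    rw [indicator_of_notMem hω, indicator_of_mem (mem_compl hω), hdiff]
    constructor <;> linarith

lemma exists_subset_condProb_le_div_two_pow (hm : m1 ≤ m2) (hca : CondAtomless m1 m2 μ)
    (hC : MeasurableSet[m2] C) (n : ℕ) :
    ∃ C', MeasurableSet[m2] C' ∧ C' ⊆ C ∧ ∀ᵐ ω ∂μ, 0 < (μ⟦C | m1⟧) ω →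
      0 < (μ⟦C' | m1⟧) ω ∧ (μ⟦C' | m1⟧) ω ≤ (μ⟦C | m1⟧) ω / 2 ^ n := by
  induction n with
  | zero => exact ⟨C, hC, subset_rfl, .of_forall fun ω h => ⟨h, by simp⟩⟩
  | succ n ih =>
    obtain ⟨D, hD, hDC, hDae⟩ := ih
    obtain ⟨C', hC', hC'D, hC'ae⟩ := exists_subset_condProb_le_half hm hca hD
    refine ⟨C', hC', hC'D.trans hDC, ?_⟩
    filter_upwards [hDae, hC'ae] with ω hDω hC'ω hCpos
    obtain ⟨hDpos, hDle⟩ := hDω hCpos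
    obtain ⟨hC'pos, hC'le⟩ := hC'ω hDpos
    refine ⟨hC'pos, hC'le.trans ?_⟩
    rw [pow_succ, ← div_div]
    gcongr

lemma exists_subset_measure_ne_zero_condProb_le (hm : m1 ≤ m2) (hca : CondAtomless m1 m2 μ)
    {S : Set Ω} (hS : MeasurableSet[m2] S) {f : Ω → ℝ} (hf : StronglyMeasurable[m1] f)
    (hf0 : 0 ≤ᵐ[μ] f) (hpos : μ {ω | 0 < f ω} ≠ 0)
    (hSpos : ∀ᵐ ω ∂μ, 0 < f ω → 0 < (μ⟦S | m1⟧) ω) :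
    ∃ E, MeasurableSet[m2] E ∧ E ⊆ S ∧ μ E ≠ 0 ∧ μ⟦E | m1⟧ ≤ᵐ[μ] f := by
  set D : ℕ → Set Ω := fun n => {ω | 1 / 2 ^ n ≤ f ω}
  have hD : ∀ n, MeasurableSet[m1] (D n) := fun n =>
    measurableSet_le measurable_const hf.measurable
  have hDpos : ∀ n, D n ⊆ {ω | 0 < f ω} := fun n ω hω =>
    lt_of_lt_of_le (by positivity : (0 : ℝ) < 1 / 2 ^ n) hω
  obtain ⟨n, hn⟩ : ∃ n, μ (D n) ≠ 0 := by
    by_contra! hnull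
    refine hpos (measure_mono_null (fun ω (hω : 0 < f ω) => ?_) (measure_iUnion_null hnull))
    obtain ⟨n, hn⟩ := exists_pow_lt_of_lt_one hω (by norm_num : (1 / 2 : ℝ) < 1)
    exact mem_iUnion.mpr ⟨n, by simpa [D, one_div_pow] using hn.le⟩
  obtain ⟨C, hC, hCS, hCae⟩ := exists_subset_condProb_le_div_two_pow hm hca hS n
  refine ⟨C ∩ D n, hC.inter (hm _ (hD n)), inter_subset_left.trans hCS,
    measure_inter_ne_zero_of_condProb_pos hm hC (hD n) hn ?_, ?_⟩
  · filter_upwards [hCae, hSpos] with ω hCω hSω hω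
    exact (hCω (hSω (hDpos n hω))).1
  · filter_upwards [condProb_inter_of_measurableSet_right hC (hD n), hCae, hSpos, hf0,
      condProb_le_one hm hS] with ω hCDω hCω hSω hf0ω hS1
    rw [hCDω]
    by_cases hω : ω ∈ D n
    · rw [indicator_of_mem hω]
      calc (μ⟦C | m1⟧) ω ≤ (μ⟦S | m1⟧) ω / 2 ^ n := (hCω (hSω (hDpos n hω))).2
        _ ≤ 1 / 2 ^ n := by gcongr
        _ ≤ f ω := hω
    · rw [indicator_of_notMem hω]
      exact hf0ω

theorem exists_subset_condProb_eq (hm : m1 ≤ m2) (hca : CondAtomless m1 m2 μ)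
    (hA : MeasurableSet[m2] A) {g : Ω → ℝ} (hg : StronglyMeasurable[m1] g) (hg0 : 0 ≤ᵐ[μ] g)
    (hgA : g ≤ᵐ[μ] μ⟦A | m1⟧) :
    ∃ B, MeasurableSet[m2] B ∧ B ⊆ A ∧ μ⟦B | m1⟧ =ᵐ[μ] g := by
  have hgi : Integrable g μ := integrable_condExp.mono' (hg.mono hm).aestronglyMeasurable <| by
    filter_upwards [hg0, hgA] with ω h0 hA using by rw [Real.norm_of_nonneg h0]; exact hA
  set 𝒟 : Set (Set Ω) := {B | MeasurableSet[m2] B ∧ B ⊆ A ∧ μ⟦B | m1⟧ ≤ᵐ[μ] g}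
  obtain ⟨T, ⟨hT, hTA, hTg⟩, hTmax⟩ := exists_ae_maximal_of_iUnion_mem (μ := μ) (𝒟 := 𝒟)
    (fun B hB => hB.1) ⟨.empty, empty_subset A, by rw [condProb_empty_s6]; exact hg0⟩
    fun f hf hf𝒟 => ⟨.iUnion fun n => (hf𝒟 n).1, iUnion_subset fun n => (hf𝒟 n).2.1,
      condProb_iUnion_le hm (fun n => (hf𝒟 n).1) hf hg hgi fun n => (hf𝒟 n).2.2⟩
  refine ⟨T, hT, hTA, hTg.antisymm ?_⟩
  -- otherwise a non-null piece of `A \ T` could be added to `T` without leaving `𝒟`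
  suffices hnull : μ {ω | 0 < g ω - (μ⟦T | m1⟧) ω} = 0 by
    filter_upwards [measure_eq_zero_iff_ae_notMem.mp hnull] with ω hω
    simpa using hω
  by_contra hpos
  obtain ⟨E, hE, hEAT, hE0, hEle⟩ := exists_subset_measure_ne_zero_condProb_le hm hca
    (hA.diff hT) (hg.sub stronglyMeasurable_condExp) (hTg.mono fun _ h => sub_nonneg.mpr h)
    hpos <| by
      filter_upwards [condProb_diff (m1 := m1) hA hT hTA, hgA] with ω hdiff hgAω hω
      rw [hdiff, Pi.sub_apply]
      rw [Pi.sub_apply] at hω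
      linarith
  have hTE : Disjoint T E := disjoint_sdiff_right.mono_right hEAT
  refine hE0 ?_
  rw [← hTE.symm.sdiff_eq_left, ← union_sdiff_left]
  refine hTmax _ ⟨hT.union hE, union_subset hTA (hEAT.trans sdiff_subset), ?_⟩ subset_union_left
  filter_upwards [condProb_union_s6 (m1 := m1) hT hE hTE, hEle] with ω hunion hEω
  rw [hunion, Pi.add_apply]
  rw [Pi.sub_apply] at hEω
  linarith

end CondAtomless

section Dyadic

variable {Ω : Type*} {m1 m2 : MeasurableSpace Ω} {μ : @Measure Ω m2} {half : Set Ω → Set Ω}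

structure IsCondHalving (m1 : MeasurableSpace Ω) (μ : @Measure Ω m2) (half : Set Ω → Set Ω) :
    Prop where
  measurableSet_half : ∀ A, MeasurableSet[m2] A → MeasurableSet[m2] (half A)
  half_subset : ∀ A, MeasurableSet[m2] A → half A ⊆ A
  condProb_half : ∀ A, MeasurableSet[m2] A →
    μ⟦half A | m1⟧ =ᵐ[μ] fun ω => (μ⟦A | m1⟧) ω / 2

lemma CondAtomless.exists_isCondHalving (hm : m1 ≤ m2) [IsFiniteMeasure μ]
    (hca : CondAtomless m1 m2 μ) : ∃ half, IsCondHalving m1 μ half := by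
  have hsplit : ∀ A, MeasurableSet[m2] A →
      ∃ B, MeasurableSet[m2] B ∧ B ⊆ A ∧ μ⟦B | m1⟧ =ᵐ[μ] fun ω => (μ⟦A | m1⟧) ω / 2 :=
    fun A hA => hca.exists_subset_condProb_eq hm hA
      (stronglyMeasurable_condExp.measurable.div_const 2).stronglyMeasurable
      (condProb_nonneg.mono fun ω h => by simp only [Pi.zero_apply] at h ⊢; positivity)
      (condProb_nonneg.mono fun ω h => by simp only [Pi.zero_apply] at h; linarith)
  choose! half hhalf using hsplit
  exact ⟨half, fun A hA => (hhalf A hA).1, fun A hA => (hhalf A hA).2.1,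
    fun A hA => (hhalf A hA).2.2⟩

/-- `dyadicSet half n k` plays the role of `B_{k / 2^n}`: level `n + 1` keeps the sets of
level `n` at even indices and fills each gap between them with a `half` of it. -/
def dyadicSet (half : Set Ω → Set Ω) : ℕ → ℕ → Set Ω
  | 0, k => if k = 0 then ∅ else univ
  | n + 1, k =>
    if k % 2 = 0 then dyadicSet half n (k / 2)
    else dyadicSet half n (k / 2) ∪
      half (dyadicSet half n (k / 2 + 1) \ dyadicSet half n (k / 2))

lemma dyadicSet_succ_two_mul (n k : ℕ) :
    dyadicSet half (n + 1) (2 * k) = dyadicSet half n k := by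
  simp [dyadicSet]

lemma dyadicSet_succ_two_mul_add_one (n k : ℕ) :
    dyadicSet half (n + 1) (2 * k + 1) =
      dyadicSet half n k ∪ half (dyadicSet half n (k + 1) \ dyadicSet half n k) := by
  simp [dyadicSet, Nat.add_mod, show (2 * k + 1) / 2 = k by omega]

lemma dyadicSet_zero_right (n : ℕ) : dyadicSet half n 0 = ∅ := by
  induction n with
  | zero => simp [dyadicSet]
  | succ n ih => simpa using (dyadicSet_succ_two_mul (half := half) n 0).trans ih

lemma dyadicSet_of_two_pow_le {n k : ℕ} (hk : 2 ^ n ≤ k) : dyadicSet half n k = univ := by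
  induction n generalizing k with
  | zero => simp [dyadicSet]; omega
  | succ n ih =>
    obtain ⟨j, rfl | rfl⟩ := Nat.even_or_odd' k
    · rw [dyadicSet_succ_two_mul, ih (by rw [pow_succ] at hk; omega)]
    · rw [dyadicSet_succ_two_mul_add_one, ih (by rw [pow_succ] at hk; omega), univ_union]

lemma measurableSet_dyadicSet (hh : IsCondHalving m1 μ half) (n k : ℕ) :
    MeasurableSet[m2] (dyadicSet half n k) := by
  induction n generalizing k with
  | zero => by_cases hk : k = 0 <;> simp [dyadicSet, hk]
  | succ n ih =>
    obtain ⟨j, rfl | rfl⟩ := Nat.even_or_odd' k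
    · rw [dyadicSet_succ_two_mul]; exact ih j
    · rw [dyadicSet_succ_two_mul_add_one]
      exact (ih j).union (hh.measurableSet_half _ ((ih (j + 1)).diff (ih j)))

lemma dyadicSet_subset_succ (hh : IsCondHalving m1 μ half) (n k : ℕ) :
    dyadicSet half n k ⊆ dyadicSet half n (k + 1) := by
  induction n generalizing k with
  | zero => by_cases hk : k = 0 <;> simp [dyadicSet, hk]
  | succ n ih =>
    obtain ⟨j, rfl | rfl⟩ := Nat.even_or_odd' k
    · rw [dyadicSet_succ_two_mul, dyadicSet_succ_two_mul_add_one]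
      exact subset_union_left
    · rw [dyadicSet_succ_two_mul_add_one, show 2 * j + 1 + 1 = 2 * (j + 1) by ring,
        dyadicSet_succ_two_mul]
      refine union_subset (ih j) ((hh.half_subset _ ?_).trans sdiff_subset)
      exact (measurableSet_dyadicSet hh n (j + 1)).diff (measurableSet_dyadicSet hh n j)

lemma monotone_dyadicSet (hh : IsCondHalving m1 μ half) (n : ℕ) :
    Monotone (dyadicSet half n) :=
  monotone_nat_of_le_succ (dyadicSet_subset_succ hh n)

lemma condProb_dyadicSet (hm : m1 ≤ m2) [IsFiniteMeasure μ] (hh : IsCondHalving m1 μ half)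
    {n k : ℕ} (hk : k ≤ 2 ^ n) :
    μ⟦dyadicSet half n k | m1⟧ =ᵐ[μ] fun _ => (k : ℝ) / 2 ^ n := by
  induction n generalizing k with
  | zero =>
    obtain rfl | rfl : k = 0 ∨ k = 1 := by omega
    · simp [dyadicSet]
    · simp only [dyadicSet, one_ne_zero, if_false, pow_zero, Nat.cast_one, div_one]
      rw [condProb_univ hm]
  | succ n ih =>
    obtain ⟨j, rfl | rfl⟩ := Nat.even_or_odd' k
    · rw [dyadicSet_succ_two_mul]
      filter_upwards [ih (k := j) (by rw [pow_succ] at hk; omega)] with ω hω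
      rw [hω, pow_succ]
      push_cast
      field_simp
    · have hj := measurableSet_dyadicSet hh n j
      have hgap := (measurableSet_dyadicSet hh n (j + 1)).diff hj
      rw [dyadicSet_succ_two_mul_add_one]
      filter_upwards [condProb_union_s6 (m1 := m1) hj (hh.measurableSet_half _ hgap)
          (disjoint_sdiff_right.mono_right (hh.half_subset _ hgap)),
        hh.condProb_half _ hgap,
        condProb_diff (m1 := m1) (measurableSet_dyadicSet hh n (j + 1)) hj
          (dyadicSet_subset_succ hh n j),
        ih (k := j) (by rw [pow_succ] at hk; omega),
        ih (k := j + 1) (by rw [pow_succ] at hk; omega)] with ω hunion hhalf hdiff hjω hj1ω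
      rw [hunion, Pi.add_apply, hhalf, hdiff, Pi.sub_apply, hjω, hj1ω, pow_succ]
      push_cast
      field_simp
      ring

def levelSet (half : Set Ω → Set Ω) (t : ℝ) : Set Ω :=
  ⋃ n : ℕ, dyadicSet half n ⌊t * 2 ^ n⌋₊

lemma monotone_dyadicSet_floor (hh : IsCondHalving m1 μ half) {t : ℝ} (ht : 0 ≤ t) :
    Monotone fun n : ℕ => dyadicSet half n ⌊t * 2 ^ n⌋₊ := by
  refine monotone_nat_of_le_succ fun n => ?_
  rw [← dyadicSet_succ_two_mul]
  refine monotone_dyadicSet hh (n + 1) (Nat.le_floor ?_)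
  push_cast
  rw [pow_succ, ← mul_assoc, mul_comm 2]
  exact mul_le_mul_of_nonneg_right (Nat.floor_le (by positivity)) zero_le_two

lemma levelSet_mono (hh : IsCondHalving m1 μ half) : Monotone (levelSet half) :=
  fun _ _ hst => iUnion_mono fun n => monotone_dyadicSet hh n
    (Nat.floor_mono (mul_le_mul_of_nonneg_right hst (by positivity)))

lemma levelSet_of_nonpos {t : ℝ} (ht : t ≤ 0) : levelSet half t = ∅ :=
  iUnion_eq_empty.mpr fun n => by
    rw [Nat.floor_of_nonpos (mul_nonpos_of_nonpos_of_nonneg ht (by positivity)),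
      dyadicSet_zero_right]

lemma levelSet_of_one_le {t : ℝ} (ht : 1 ≤ t) : levelSet half t = univ :=
  eq_univ_of_univ_subset <| calc
    univ = dyadicSet half 0 ⌊t * 2 ^ 0⌋₊ :=
      (dyadicSet_of_two_pow_le (Nat.le_floor (by simpa using ht))).symm
    _ ⊆ levelSet half t := subset_iUnion (fun n : ℕ => dyadicSet half n ⌊t * 2 ^ n⌋₊) 0

lemma measurableSet_levelSet (hh : IsCondHalving m1 μ half) (t : ℝ) :
    MeasurableSet[m2] (levelSet half t) :=
  .iUnion fun n => measurableSet_dyadicSet hh n _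

lemma condProb_levelSet (hm : m1 ≤ m2) [IsFiniteMeasure μ] (hh : IsCondHalving m1 μ half)
    {t : ℝ} (ht : t ∈ Icc (0 : ℝ) 1) : μ⟦levelSet half t | m1⟧ =ᵐ[μ] fun _ => t := by
  have hfloor : ∀ n : ℕ, (⌊t * 2 ^ n⌋₊ : ℝ) / 2 ^ n ≤ t := fun n => by
    rw [div_le_iff₀ (by positivity)]
    exact Nat.floor_le (mul_nonneg ht.1 (by positivity))
  have hdyadic : ∀ n : ℕ, μ⟦dyadicSet half n ⌊t * 2 ^ n⌋₊ | m1⟧ =ᵐ[μ]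
      fun _ => (⌊t * 2 ^ n⌋₊ : ℝ) / 2 ^ n := fun n => by
    refine condProb_dyadicSet hm hh (Nat.floor_le_of_le ?_)
    calc t * 2 ^ n ≤ 1 * 2 ^ n := by gcongr; exact ht.2
      _ = ((2 ^ n : ℕ) : ℝ) := by push_cast; ring
  refine EventuallyLE.antisymm ?_ ?_
  · refine condProb_iUnion_le hm (fun n => measurableSet_dyadicSet hh n _)
      (monotone_dyadicSet_floor hh ht.1) stronglyMeasurable_const (integrable_const t)
      fun n => ?_
    filter_upwards [hdyadic n] with ω hω
    exact hω.le.trans (hfloor n)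
  · have hlower : ∀ᵐ ω ∂μ, ∀ n : ℕ,
        (⌊t * 2 ^ n⌋₊ : ℝ) / 2 ^ n ≤ (μ⟦levelSet half t | m1⟧) ω := by
      refine ae_all_iff.mpr fun n => ?_
      filter_upwards [hdyadic n, condProb_mono (m1 := m1) (measurableSet_dyadicSet hh n _)
        (measurableSet_levelSet hh t)
        (subset_iUnion (fun n : ℕ => dyadicSet half n ⌊t * 2 ^ n⌋₊) n)] with ω hω hmono
      exact hω.symm.le.trans hmono
    filter_upwards [hlower] with ω hω
    exact le_of_tendsto ((tendsto_nat_floor_mul_div_atTop ht.1).comp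
      (tendsto_pow_atTop_atTop_of_one_lt one_lt_two)) (.of_forall hω)

end Dyadic

structure IsCondUniformFamily {Ω : Type*} {m2 : MeasurableSpace Ω} (m1 : MeasurableSpace Ω)
    (μ : @Measure Ω m2) (B : ℝ → Set Ω) : Prop where
  mono : Monotone B
  eq_empty : ∀ t < 0, B t = ∅
  eq_univ : B 1 = univ
  measurableSet : ∀ t, MeasurableSet[m2] (B t)
  condProb_eq : ∀ t ∈ Icc (0 : ℝ) 1, μ⟦B t | m1⟧ =ᵐ[μ] fun _ => t

lemma isCondUniformFamily_levelSet {Ω : Type*} {m1 m2 : MeasurableSpace Ω} (hm : m1 ≤ m2)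
    {μ : @Measure Ω m2} [IsFiniteMeasure μ] {half : Set Ω → Set Ω}
    (hh : IsCondHalving m1 μ half) : IsCondUniformFamily m1 μ (levelSet half) where
  mono := levelSet_mono hh
  eq_empty _ ht := levelSet_of_nonpos ht.le
  eq_univ := levelSet_of_one_le le_rfl
  measurableSet := measurableSet_levelSet hh
  condProb_eq _ ht := condProb_levelSet hm hh ht

theorem CondAtomless.exists_isCondUniformFamily {Ω : Type*} {m1 m2 : MeasurableSpace Ω}
    (hm : m1 ≤ m2) {μ : @Measure Ω m2} [IsFiniteMeasure μ] (hca : CondAtomless m1 m2 μ) :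
    ∃ B, IsCondUniformFamily m1 μ B :=
  let ⟨_, hh⟩ := hca.exists_isCondHalving hm
  ⟨_, isCondUniformFamily_levelSet hm hh⟩

noncomputable def firstIndex {Ω : Type*} (B : ℝ → Set Ω) (ω : Ω) : ℝ :=
  sInf {t | ω ∈ B t}

namespace IsCondUniformFamily

variable {Ω : Type*} {m1 m2 : MeasurableSpace Ω} {μ : @Measure Ω m2} {B : ℝ → Set Ω}

lemma bddBelow (hB : IsCondUniformFamily m1 μ B) (ω : Ω) : BddBelow {t | ω ∈ B t} :=
  ⟨0, fun t ht => not_lt.mp fun h => by simp [hB.eq_empty t h] at ht⟩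

lemma mem_one (hB : IsCondUniformFamily m1 μ B) (ω : Ω) : ω ∈ B 1 := by
  simp [hB.eq_univ]

lemma firstIndex_le_iff (hB : IsCondUniformFamily m1 μ B) {t : ℝ} {ω : Ω} :
    firstIndex B ω ≤ t ↔ ∀ s, t < s → ω ∈ B s := by
  refine ⟨fun h s hs => ?_, fun h => le_of_forall_pos_le_add fun ε hε =>
    csInf_le (hB.bddBelow ω) (h (t + ε) (by linarith))⟩
  obtain ⟨r, hr, hrs⟩ := exists_lt_of_csInf_lt ⟨1, hB.mem_one ω⟩ (h.trans_lt hs)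
  exact hB.mono hrs.le hr

lemma setOf_firstIndex_le (hB : IsCondUniformFamily m1 μ B) (t : ℝ) :
    {ω | firstIndex B ω ≤ t} = ⋂ n : ℕ, B (t + 1 / (n + 1)) := by
  ext ω
  simp only [mem_ofPred_eq, mem_iInter, hB.firstIndex_le_iff]
  refine ⟨fun h n => h _ (lt_add_of_pos_right t Nat.one_div_pos_of_nat), fun h s hs => ?_⟩
  obtain ⟨n, hn⟩ := exists_nat_one_div_lt (sub_pos.mpr hs)
  exact hB.mono (by linarith) (h n)

lemma subset_setOf_firstIndex_le (hB : IsCondUniformFamily m1 μ B) (t : ℝ) :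
    B t ⊆ {ω | firstIndex B ω ≤ t} :=
  fun _ hω => hB.firstIndex_le_iff.mpr fun _ hs => hB.mono hs.le hω

lemma setOf_firstIndex_le_of_neg (hB : IsCondUniformFamily m1 μ B) {t : ℝ} (ht : t < 0) :
    {ω | firstIndex B ω ≤ t} = ∅ := by
  rw [hB.setOf_firstIndex_le]
  obtain ⟨n, hn⟩ := exists_nat_one_div_lt (neg_pos.mpr ht)
  exact iInter_eq_empty_iff.mpr fun ω => ⟨n, by rw [hB.eq_empty _ (by linarith)]; exact id⟩

lemma setOf_firstIndex_le_of_one_le (hB : IsCondUniformFamily m1 μ B) {t : ℝ} (ht : 1 ≤ t) :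
    {ω | firstIndex B ω ≤ t} = univ :=
  eq_univ_of_forall fun ω => (csInf_le (hB.bddBelow ω) (hB.mem_one ω)).trans ht

lemma measurable_firstIndex (hB : IsCondUniformFamily m1 μ B) :
    Measurable[m2] (firstIndex B) :=
  measurable_of_Iic fun t => by
    change MeasurableSet[m2] {ω | firstIndex B ω ≤ t}
    rw [hB.setOf_firstIndex_le]
    exact .iInter fun n => hB.measurableSet _

variable (hm : m1 ≤ m2) [IsProbabilityMeasure μ]
include hm

lemma measure_eq (hB : IsCondUniformFamily m1 μ B) {t : ℝ} (ht : t ∈ Icc (0 : ℝ) 1) :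
    μ (B t) = ENNReal.ofReal t := by
  rw [← ofReal_measureReal,
    measureReal_eq_of_condProb_ae_eq_const hm (hB.measurableSet t) (hB.condProb_eq t ht)]

lemma measure_le (hB : IsCondUniformFamily m1 μ B) {t : ℝ} (ht : 0 ≤ t) :
    μ (B t) ≤ ENNReal.ofReal t := by
  rcases le_total t 1 with ht1 | ht1
  · exact (hB.measure_eq hm ⟨ht, ht1⟩).le
  · exact prob_le_one.trans (by simpa using ENNReal.ofReal_le_ofReal ht1)

lemma ae_eq_setOf_firstIndex_le (hB : IsCondUniformFamily m1 μ B) {t : ℝ}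
    (ht : t ∈ Icc (0 : ℝ) 1) : B t =ᵐ[μ] {ω | firstIndex B ω ≤ t} := by
  refine ae_eq_of_subset_of_measure_ge (hB.subset_setOf_firstIndex_le t) ?_
    (hB.measurableSet t).nullMeasurableSet (measure_ne_top μ _)
  have hlim : Tendsto (fun n : ℕ => ENNReal.ofReal (t + 1 / (n + 1))) atTop
      (𝓝 (ENNReal.ofReal t)) := by
    simpa using ENNReal.tendsto_ofReal (tendsto_one_div_add_atTop_nhds_zero_nat.const_add t)
  rw [hB.measure_eq hm ht]
  refine ge_of_tendsto' hlim fun n => ?_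
  rw [hB.setOf_firstIndex_le]
  exact (measure_mono (iInter_subset _ n)).trans
    (hB.measure_le hm (add_nonneg ht.1 Nat.one_div_pos_of_nat.le))

lemma condProb_setOf_firstIndex_le (hB : IsCondUniformFamily m1 μ B) (a : ℝ) :
    ∃ c : ℝ, μ⟦{ω | firstIndex B ω ≤ a} | m1⟧ =ᵐ[μ] fun _ => c := by
  rcases lt_or_ge a 0 with ha0 | ha0
  · exact ⟨0, by rw [hB.setOf_firstIndex_le_of_neg ha0, condProb_empty_s6]; rfl⟩
  rcases le_or_gt a 1 with ha1 | ha1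
  · exact ⟨a, (condProb_congr_ae (hB.ae_eq_setOf_firstIndex_le hm ⟨ha0, ha1⟩)).symm.trans
      (hB.condProb_eq a ⟨ha0, ha1⟩)⟩
  · exact ⟨1, by rw [hB.setOf_firstIndex_le_of_one_le ha1.le, condProb_univ hm]⟩

theorem indep_generateFrom (hB : IsCondUniformFamily m1 μ B) :
    Indep (MeasurableSpace.generateFrom {S | ∃ t ∈ Icc (0 : ℝ) 1, S = B t}) m1 μ := by
  refine indep_generateFrom_of_condProb_ae_eq_const hm ?_ ?_ ?_
  · rintro _ ⟨s, hs, rfl⟩ _ ⟨t, ht, rfl⟩ -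
    rcases le_total s t with hst | hst
    · exact ⟨s, hs, inter_eq_left.mpr (hB.mono hst)⟩
    · exact ⟨t, ht, inter_eq_right.mpr (hB.mono hst)⟩
  · rintro _ ⟨t, -, rfl⟩
    exact hB.measurableSet t
  · rintro _ ⟨t, ht, rfl⟩
    exact ⟨t, hB.condProb_eq t ht⟩

theorem indep_comap_firstIndex (hB : IsCondUniformFamily m1 μ B) :
    Indep (MeasurableSpace.comap (firstIndex B) Real.measurableSpace) m1 μ := by
  rw [show Real.measurableSpace = borel ℝ from rfl, borel_eq_generateFrom_Iic ℝ,
    MeasurableSpace.comap_generateFrom]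
  refine indep_generateFrom_of_condProb_ae_eq_const hm (isPiSystem_Iic.comap _) ?_ ?_
  · rintro _ ⟨_, ⟨a, rfl⟩, rfl⟩
    exact hB.measurable_firstIndex measurableSet_Iic
  · rintro _ ⟨_, ⟨a, rfl⟩, rfl⟩
    exact hB.condProb_setOf_firstIndex_le hm a

theorem map_firstIndex (hB : IsCondUniformFamily m1 μ B) :
    μ.map (firstIndex B) = volume.restrict (Icc 0 1) := by
  have : IsProbabilityMeasure (μ.map (firstIndex B)) :=
    Measure.isProbabilityMeasure_map hB.measurable_firstIndex.aemeasurable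
  have : IsProbabilityMeasure (volume.restrict (Icc (0 : ℝ) 1)) :=
    ⟨by simp⟩
  refine Measure.ext_of_Iic _ _ fun a => ?_
  have hIcc : Iic a ∩ Icc 0 1 = Icc 0 (min a 1) := by ext x; simp; tauto
  rw [Measure.map_apply hB.measurable_firstIndex measurableSet_Iic,
    Measure.restrict_apply measurableSet_Iic, hIcc, Real.volume_Icc, sub_zero]
  change μ {ω | firstIndex B ω ≤ a} = _
  rcases lt_or_ge a 0 with ha0 | ha0
  · rw [hB.setOf_firstIndex_le_of_neg ha0, measure_empty,
      ENNReal.ofReal_of_nonpos (min_le_of_left_le ha0.le)]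
  rcases le_or_gt a 1 with ha1 | ha1
  · rw [← measure_congr (hB.ae_eq_setOf_firstIndex_le hm ⟨ha0, ha1⟩),
      hB.measure_eq hm ⟨ha0, ha1⟩, min_eq_left ha1]
  · rw [hB.setOf_firstIndex_le_of_one_le ha1.le, measure_univ, min_eq_right ha1.le,
      ENNReal.ofReal_one]

end IsCondUniformFamily

/-- If `F₂` is atomless conditionally to `F₁`, there is an increasing family
`(B_t)_{t ∈ [0,1]}` of `F₂`-measurable sets with `E[1_{B_t} | F₁] = t` a.s., whose generated
σ-algebra is independent of `F₁`, and an `F₂`-measurable random variable `U`, uniformly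
distributed on `[0,1]` and independent of `F₁`, with `B_t = {U ≤ t}` up to null sets. -/
theorem stmt_6 {Ω : Type*} {m1 m2 : MeasurableSpace Ω} (hm : m1 ≤ m2)
    (μ : @Measure Ω m2) [IsProbabilityMeasure μ]
    (hca : CondAtomless m1 m2 μ) :
    ∃ B : ℝ → Set Ω, ∃ U : Ω → ℝ,
      (∀ s t, 0 ≤ s → s ≤ t → t ≤ 1 → B s ⊆ B t) ∧
      (∀ t ∈ Set.Icc (0 : ℝ) 1, MeasurableSet[m2] (B t)) ∧
      (∀ t ∈ Set.Icc (0 : ℝ) 1,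
        (μ[(B t).indicator (fun _ => (1 : ℝ)) | m1]) =ᵐ[μ] fun _ => t) ∧
      ProbabilityTheory.Indep
        (MeasurableSpace.generateFrom {S : Set Ω | ∃ t ∈ Set.Icc (0 : ℝ) 1, S = B t}) m1 μ ∧
      Measurable[m2] U ∧
      μ.map U = (volume : Measure ℝ).restrict (Set.Icc 0 1) ∧
      ProbabilityTheory.Indep (MeasurableSpace.comap U Real.measurableSpace) m1 μ ∧
      ∀ t ∈ Set.Icc (0 : ℝ) 1, μ (symmDiff (B t) {ω | U ω ≤ t}) = 0 := by
  obtain ⟨B, hB⟩ := hca.exists_isCondUniformFamily hm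
  exact ⟨B, firstIndex B, fun _ _ _ hst _ => hB.mono hst, fun t _ => hB.measurableSet t,
    hB.condProb_eq, hB.indep_generateFrom hm, hB.measurable_firstIndex, hB.map_firstIndex hm,
    hB.indep_comap_firstIndex hm,
    fun _ ht => measure_symmDiff_eq_zero_iff.mpr (hB.ae_eq_setOf_firstIndex_le hm ht)⟩
end

section
/- Let Q₁, …, Qₙ be probability measures on a measurable space (Ω, A). Let Q₀ = Σ_k λ_k Q_k be a convex combination with each λ_k > 0, and let f_k be an A-measurable version of dQ_k/dQ₀. Let Q be another probability measure dominating each Q_k, and let g_k be an A-measurable version of dQ_k/dQ. Let N = {N ∈ A : Q₀[N] = 0}, let F be the σ-algebra generated by f₁, …, fₙ and G the σ-algebra generated by g₁, …, gₙ. Then F ⊂ σ(G, N), the σ-algebra generated by G together with N. -/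
open MeasureTheory ENNReal MeasurableSpace
open scoped symmDiff

/-!
With `h = ∑ λ_k g_k` one has `Q₀ = h · Q`, so `Q_k = f_k · Q₀ = (h f_k) · Q` and therefore
`g_k = h f_k` `Q`-a.e. Since `h` is `Q₀`-a.e. positive and finite, `f_k = g_k / h` `Q₀`-a.e.;
the right-hand side is `G`-measurable, and a measurable function that agrees `Q₀`-a.e. with a
`G`-measurable one is measurable for `σ(G, N)`.
-/

section NullCompletion

variable {Ω : Type*} {m m0 : MeasurableSpace Ω} {μ : Measure[m0] Ω}

lemma measurableSet_sup_generateFrom_null_of_ae_eq (hm : m ≤ m0) {s t : Set Ω}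
    (hs : MeasurableSet[m0] s) (ht : MeasurableSet[m] t) (hst : s =ᵐ[μ] t) :
    MeasurableSet[m ⊔ generateFrom {N | MeasurableSet[m0] N ∧ μ N = 0}] s := by
  have hnull : MeasurableSet[generateFrom {N | MeasurableSet[m0] N ∧ μ N = 0}] (t ∆ s) :=
    measurableSet_generateFrom ⟨(hm t ht).symmDiff hs, measure_symmDiff_eq_zero_iff.2 hst.symm⟩
  rw [← symmDiff_symmDiff_cancel_left t s]
  exact (le_sup_left (b := generateFrom _) t ht).symmDiff (le_sup_right (a := m) _ hnull)

lemma comap_le_sup_generateFrom_null_of_ae_eq {β : Type*} [mβ : MeasurableSpace β]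
    (hm : m ≤ m0) {φ ψ : Ω → β} (hφ : Measurable[m0] φ) (hψ : Measurable[m] ψ)
    (hφψ : φ =ᵐ[μ] ψ) :
    mβ.comap φ ≤ m ⊔ generateFrom {N | MeasurableSet[m0] N ∧ μ N = 0} := by
  rintro _ ⟨u, hu, rfl⟩
  exact measurableSet_sup_generateFrom_null_of_ae_eq hm (hφ hu) (hψ hu) (hφψ.preimage u)

end NullCompletion

section Densities

variable {Ω : Type*} [MeasurableSpace Ω] {μ : Measure Ω}

lemma withDensity_finset_sum_smul {ι : Type*} (s : Finset ι) (c : ι → ℝ≥0∞)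
    {g : ι → Ω → ℝ≥0∞} (hg : ∀ i, Measurable (g i)) :
    μ.withDensity (∑ i ∈ s, c i • g i) = ∑ i ∈ s, c i • μ.withDensity (g i) := by
  classical
  induction s using Finset.induction_on with
  | empty => simp
  | insert i s hi ih =>
    rw [Finset.sum_insert hi, Finset.sum_insert hi, withDensity_add_left ((hg i).const_smul _),
      withDensity_smul _ (hg i), ih]

lemma lintegral_ne_top_of_isFiniteMeasure_withDensity {g : Ω → ℝ≥0∞}
    [IsFiniteMeasure (μ.withDensity g)] : ∫⁻ x, g x ∂μ ≠ ∞ := by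
  rw [← setLIntegral_univ, ← withDensity_apply _ MeasurableSet.univ]
  exact measure_ne_top _ _

/-- The chain rule for densities, solved for the inner density. -/
lemma ae_eq_div_of_withDensity_withDensity_eq {h f g : Ω → ℝ≥0∞} (hh : Measurable h)
    (hf : Measurable f) (hg : Measurable g) [IsFiniteMeasure (μ.withDensity h)]
    [IsFiniteMeasure (μ.withDensity g)]
    (hfg : (μ.withDensity h).withDensity f = μ.withDensity g) :
    f =ᵐ[μ.withDensity h] g / h := by
  have hac : μ.withDensity h ≪ μ := withDensity_absolutelyContinuous μ h
  have hg_eq : g =ᵐ[μ] h * f := by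
    rw [← withDensity_eq_iff hg.aemeasurable (hh.mul hf).aemeasurable
      lintegral_ne_top_of_isFiniteMeasure_withDensity,
      withDensity_mul μ hh hf, hfg]
  have hh_ne_zero : ∀ᵐ x ∂μ.withDensity h, h x ≠ 0 :=
    (ae_withDensity_iff hh).2 (ae_of_all _ fun _ => id)
  have hh_ne_top : ∀ᵐ x ∂μ.withDensity h, h x ≠ ∞ := hac.ae_le <|
    (ae_lt_top hh lintegral_ne_top_of_isFiniteMeasure_withDensity).mono fun _ hx => hx.ne
  filter_upwards [hac.ae_eq hg_eq, hh_ne_zero, hh_ne_top] with x hx hx0 hxtop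
  rw [Pi.div_apply, ENNReal.eq_div_iff hx0 hxtop, hx, Pi.mul_apply]

end Densities

theorem stmt_9_general {Ω : Type*} [mA : MeasurableSpace Ω] (n : ℕ)
    (Q : Fin n → Measure Ω) (hQprob : ∀ k, IsProbabilityMeasure (Q k))
    (l : Fin n → ℝ≥0∞) (hlsum : ∑ k, l k = 1)
    (Q0 : Measure Ω) (hQ0 : Q0 = ∑ k, l k • Q k)
    (f : Fin n → Ω → ℝ≥0∞) (hfmeas : ∀ k, Measurable (f k))
    (hf : ∀ k, Q0.withDensity (f k) = Q k)
    (Q' : Measure Ω)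
    (g : Fin n → Ω → ℝ≥0∞) (hgmeas : ∀ k, Measurable (g k))
    (hg : ∀ k, Q'.withDensity (g k) = Q k) :
    (⨆ k, MeasurableSpace.comap (f k) ENNReal.measurableSpace) ≤
      (⨆ k, MeasurableSpace.comap (g k) ENNReal.measurableSpace) ⊔
        MeasurableSpace.generateFrom {N : Set Ω | MeasurableSet N ∧ Q0 N = 0} := by
  have hGle : (⨆ k, MeasurableSpace.comap (g k) ENNReal.measurableSpace) ≤ mA :=
    iSup_le fun k => (hgmeas k).comap_le
  have hgG : ∀ k, Measurable[⨆ k, MeasurableSpace.comap (g k) ENNReal.measurableSpace] (g k) :=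
    fun k => Measurable.of_comap_le (le_iSup (fun k => MeasurableSpace.comap (g k) _) k)
  set h : Ω → ℝ≥0∞ := ∑ k, l k • g k
  have hhG : Measurable[⨆ k, MeasurableSpace.comap (g k) ENNReal.measurableSpace] h := by
    simpa only [h, ← Finset.sum_apply] using
      Finset.measurable_sum _ fun k _ => (hgG k).const_smul (l k)
  have hQ0h : Q'.withDensity h = Q0 := by
    simp only [h, withDensity_finset_sum_smul _ _ hgmeas, hg, hQ0]
  have : IsProbabilityMeasure (Q'.withDensity h) := ⟨by simp [hQ0h, hQ0, hlsum]⟩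
  refine iSup_le fun k => ?_
  have : IsFiniteMeasure (Q'.withDensity (g k)) := hg k ▸ inferInstance
  have hfk : f k =ᵐ[Q0] g k / h := by
    rw [← hQ0h]
    refine ae_eq_div_of_withDensity_withDensity_eq (hhG.mono hGle le_rfl) (hfmeas k) (hgmeas k) ?_
    rw [hQ0h, hf k, hg k]
  exact comap_le_sup_generateFrom_null_of_ae_eq hGle (hfmeas k) ((hgG k).div hhG) hfk

/-- Let `Q₁, …, Qₙ` be probability measures, `Q₀ = Σ λ_k Q_k` a convex combination with all
`λ_k > 0`, `f_k` a measurable version of `dQ_k/dQ₀`, `Q` another dominating probability measure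
and `g_k` a measurable version of `dQ_k/dQ`.  With `N` the `Q₀`-null sets, `F = σ(f₁,…,fₙ)` and
`G = σ(g₁,…,gₙ)`, one has `F ⊆ σ(G, N)`. -/
theorem stmt_9 {Ω : Type*} [mA : MeasurableSpace Ω] (n : ℕ)
    (Q : Fin n → Measure Ω) (hQprob : ∀ k, IsProbabilityMeasure (Q k))
    (l : Fin n → ℝ≥0∞) (hlpos : ∀ k, 0 < l k) (hlsum : ∑ k, l k = 1)
    (Q0 : Measure Ω) (hQ0 : Q0 = ∑ k, l k • Q k)
    (f : Fin n → Ω → ℝ≥0∞) (hfmeas : ∀ k, Measurable (f k))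
    (hf : ∀ k, Q0.withDensity (f k) = Q k)
    (Q' : Measure Ω) (hQ'prob : IsProbabilityMeasure Q') (hdom : ∀ k, Q k ≪ Q')
    (g : Fin n → Ω → ℝ≥0∞) (hgmeas : ∀ k, Measurable (g k))
    (hg : ∀ k, Q'.withDensity (g k) = Q k) :
    (⨆ k, MeasurableSpace.comap (f k) ENNReal.measurableSpace) ≤
      (⨆ k, MeasurableSpace.comap (g k) ENNReal.measurableSpace) ⊔
        MeasurableSpace.generateFrom {N : Set Ω | MeasurableSet N ∧ Q0 N = 0} :=
  stmt_9_general (mA := mA) n Q hQprob l hlsum Q0 hQ0 f hfmeas hf Q' g hgmeas hg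
end

section
/- Suppose F₂ is atomless conditionally to F₁, let U be an F₂-measurable random variable uniformly distributed on [0, 1] and independent of F₁, and let u_{1,2} : L^∞(F₂) → L^∞(F₁) be a conditional coherent utility function having both the Fatou property and the Lebesgue property. Define φ(h) = u_{1,2}(1_{{U ≤ h}}) for F₁-measurable h : Ω → [0, 1]. If (h_n) is a sequence of F₁-measurable functions with values in [0, 1] such that h_n ↓ h pointwise a.s. or h_n ↑ h pointwise a.s., then φ(h_n) → φ(h) in probability. -/
open MeasureTheory Filter

/-- A real-valued function is (uniformly) bounded. -/
def Bdd {Ω : Type*} (ξ : Ω → ℝ) : Prop := ∃ C : ℝ, ∀ ω, |ξ ω| ≤ C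

/-- A conditional coherent utility function `u : L^∞(F₂) → L^∞(F₁)`:  it maps bounded
`F₂`-measurable functions to bounded `F₁`-measurable ones, `u(0) = 0`, it is monotone
(`ξ ≥ 0 ⇒ u(ξ) ≥ 0`), concave, positively homogeneous with respect to nonnegative bounded
`F₁`-measurable weights, and `F₁`-translation invariant. -/
structure CondCoherentUtility {Ω : Type*} (m1 m2 : MeasurableSpace Ω) (μ : @MeasureTheory.Measure Ω m2)
    (u : (Ω → ℝ) → Ω → ℝ) : Prop where
  map_zero : u 0 =ᵐ[μ] 0
  measurable_map : ∀ ξ, Measurable[m2] ξ → Bdd ξ → Measurable[m1] (u ξ) ∧ Bdd (u ξ)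
  nonneg : ∀ ξ, Measurable[m2] ξ → Bdd ξ → (∀ ω, 0 ≤ ξ ω) → ∀ᵐ ω ∂μ, 0 ≤ u ξ ω
  concave : ∀ ξ η lam, Measurable[m2] ξ → Bdd ξ → Measurable[m2] η → Bdd η →
    Measurable[m1] lam → (∀ ω, lam ω ∈ Set.Icc (0 : ℝ) 1) →
    ∀ᵐ ω ∂μ, lam ω * u ξ ω + (1 - lam ω) * u η ω ≤
      u (fun ω' => lam ω' * ξ ω' + (1 - lam ω') * η ω') ω
  poshom : ∀ ξ lam, Measurable[m2] ξ → Bdd ξ → Measurable[m1] lam → Bdd lam →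
    (∀ ω, 0 ≤ lam ω) →
    u (fun ω' => lam ω' * ξ ω') =ᵐ[μ] fun ω => lam ω * u ξ ω
  transl : ∀ ξ a, Measurable[m2] ξ → Bdd ξ → Measurable[m1] a → Bdd a →
    u (ξ + a) =ᵐ[μ] u ξ + a

/-- The Lebesgue property: for any uniformly bounded sequence of `F₂`-measurable functions
converging in probability, the utilities converge in probability. -/
def LebesgueProp {Ω : Type*} {m2 : MeasurableSpace Ω} (μ : MeasureTheory.Measure Ω)
    (u : (Ω → ℝ) → Ω → ℝ) : Prop :=
  ∀ (ξ : ℕ → Ω → ℝ) (η : Ω → ℝ), (∀ n, Measurable[m2] (ξ n)) → Measurable[m2] η →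
    (∃ C : ℝ, ∀ n ω, |ξ n ω| ≤ C) → Bdd η →
    MeasureTheory.TendstoInMeasure μ ξ Filter.atTop η →
    MeasureTheory.TendstoInMeasure μ (fun n => u (ξ n)) Filter.atTop (u η)

/-- The Fatou property: for any uniformly bounded sequence of `F₂`-measurable functions
converging in probability to `η`, `u(η) ≥ limsup u(ξ_n)` a.s. -/
def FatouProp {Ω : Type*} {m2 : MeasurableSpace Ω} (μ : MeasureTheory.Measure Ω)
    (u : (Ω → ℝ) → Ω → ℝ) : Prop :=
  ∀ (ξ : ℕ → Ω → ℝ) (η : Ω → ℝ), (∀ n, Measurable[m2] (ξ n)) → Measurable[m2] η →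
    (∃ C : ℝ, ∀ n ω, |ξ n ω| ≤ C) → Bdd η →
    MeasureTheory.TendstoInMeasure μ ξ Filter.atTop η →
    ∀ᵐ ω ∂μ, Filter.limsup (fun n => u (ξ n) ω) Filter.atTop ≤ u η ω

/-- Continuity of `φ(h) = u_{1,2}(1_{U ≤ h})` along monotone a.s. convergent sequences of
`F₁`-measurable `[0,1]`-valued functions. -/
theorem stmt_10 {Ω : Type*} {m1 m2 : MeasurableSpace Ω} (hm : m1 ≤ m2)
    (μ : @Measure Ω m2) [IsProbabilityMeasure μ]
    (hca : CondAtomless m1 m2 μ)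
    (U : Ω → ℝ) (hU : Measurable[m2] U)
    (hUdist : μ.map U = (volume : Measure ℝ).restrict (Set.Icc 0 1))
    (hUindep : ProbabilityTheory.Indep (MeasurableSpace.comap U Real.measurableSpace) m1 μ)
    (u : (Ω → ℝ) → Ω → ℝ) (hu : CondCoherentUtility m1 m2 μ u)
    (hFatou : FatouProp μ u) (hLeb : LebesgueProp μ u)
    (h : ℕ → Ω → ℝ) (h₀ : Ω → ℝ)
    (hhmeas : ∀ n, Measurable[m1] (h n)) (hhrange : ∀ n ω, h n ω ∈ Set.Icc (0 : ℝ) 1)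
    (hh₀meas : Measurable[m1] h₀) (hh₀range : ∀ ω, h₀ ω ∈ Set.Icc (0 : ℝ) 1)
    (hmono : (∀ᵐ ω ∂μ, Antitone (fun n => h n ω) ∧
        Filter.Tendsto (fun n => h n ω) Filter.atTop (nhds (h₀ ω))) ∨
      (∀ᵐ ω ∂μ, Monotone (fun n => h n ω) ∧
        Filter.Tendsto (fun n => h n ω) Filter.atTop (nhds (h₀ ω)))) :
    TendstoInMeasure μ
      (fun n => u ({ω | U ω ≤ h n ω}.indicator (fun _ => (1 : ℝ)))) Filter.atTop
      (u ({ω | U ω ≤ h₀ ω}.indicator (fun _ => (1 : ℝ)))) := by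
  have hmh2 : Measurable[m2] h₀ := hh₀meas.mono hm le_rfl
  -- the set {U = h₀} is null
  have hnull : μ {ω | U ω = h₀ ω} = 0 := by
    have hind : ProbabilityTheory.IndepFun h₀ U μ :=
      ProbabilityTheory.indep_of_indep_of_le_left hUindep.symm hh₀meas.comap_le
    have hmap : μ.map (fun ω => (h₀ ω, U ω)) = (μ.map h₀).prod (μ.map U) :=
      (ProbabilityTheory.indepFun_iff_map_prod_eq_prod_map_map hmh2.aemeasurable
        hU.aemeasurable).mp hind
    have hdiag : MeasurableSet {p : ℝ × ℝ | p.1 = p.2} :=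
      measurableSet_eq_fun measurable_fst measurable_snd
    have h1 : μ {ω | U ω = h₀ ω} = (μ.map (fun ω => (h₀ ω, U ω))) {p | p.1 = p.2} := by
      rw [Measure.map_apply (hmh2.prodMk hU) hdiag]
      congr 1; ext ω; simp [eq_comm]
    rw [h1, hmap, Measure.prod_apply hdiag]
    have h2 : ∀ x : ℝ, (μ.map U) {x} = 0 := by
      intro x
      rw [hUdist, Measure.restrict_apply (measurableSet_singleton x)]
      exact measure_mono_null Set.inter_subset_left (by simp)
    simp [h2]
  have hξmeas : ∀ n, Measurable[m2] ({ω | U ω ≤ h n ω}.indicator (fun _ => (1 : ℝ))) :=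
    fun n => measurable_const.indicator (measurableSet_le hU ((hhmeas n).mono hm le_rfl))
  have hηmeas : Measurable[m2] ({ω | U ω ≤ h₀ ω}.indicator (fun _ => (1 : ℝ))) :=
    measurable_const.indicator (measurableSet_le hU hmh2)
  have hbd : ∀ (s : Set Ω) (ω : Ω), |s.indicator (fun _ => (1 : ℝ)) ω| ≤ 1 := by
    intro s ω; by_cases hω : ω ∈ s <;> simp [Set.indicator_apply, hω]
  -- a.e. pointwise convergence of the indicators
  have hae : ∀ᵐ ω ∂μ, Tendsto
      (fun n => ({ω' | U ω' ≤ h n ω'}.indicator (fun _ => (1 : ℝ))) ω) atTop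
      (nhds (({ω' | U ω' ≤ h₀ ω'}.indicator (fun _ => (1 : ℝ))) ω)) := by
    rcases hmono with hA | hM
    · filter_upwards [hA] with ω hω
      obtain ⟨hanti, htend⟩ := hω
      by_cases hle : U ω ≤ h₀ ω
      · have : ∀ n, ({ω' | U ω' ≤ h n ω'}.indicator (fun _ => (1 : ℝ))) ω = 1 := by
          intro n
          have : U ω ≤ h n ω := hle.trans (hanti.le_of_tendsto htend n)
          simp [Set.indicator_apply, this]
        simp only [this, Set.indicator_apply, Set.mem_setOf_eq, hle, if_true]
        exact tendsto_const_nhds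
      · have hlt : h₀ ω < U ω := lt_of_not_ge hle
        have hev : ∀ᶠ n in atTop, h n ω < U ω := htend.eventually (Iio_mem_nhds hlt)
        have : (fun n => ({ω' | U ω' ≤ h n ω'}.indicator (fun _ => (1 : ℝ))) ω)
            =ᶠ[atTop] fun _ => (0 : ℝ) := by
          filter_upwards [hev] with n hn
          simp [Set.indicator_apply, not_le_of_gt hn]
        rw [show (({ω' | U ω' ≤ h₀ ω'}.indicator (fun _ => (1 : ℝ))) ω) = 0 by
          simp [Set.indicator_apply, hle]]
        exact Tendsto.congr' this.symm tendsto_const_nhds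
    · have hne : ∀ᵐ ω ∂μ, U ω ≠ h₀ ω := by
        rw [ae_iff]; simpa using hnull
      filter_upwards [hM, hne] with ω hω hne'
      obtain ⟨hmon, htend⟩ := hω
      by_cases hle : U ω ≤ h₀ ω
      · have hlt : U ω < h₀ ω := lt_of_le_of_ne hle hne'
        have hev : ∀ᶠ n in atTop, U ω < h n ω := htend.eventually (Ioi_mem_nhds hlt)
        have : (fun n => ({ω' | U ω' ≤ h n ω'}.indicator (fun _ => (1 : ℝ))) ω)
            =ᶠ[atTop] fun _ => (1 : ℝ) := by
          filter_upwards [hev] with n hn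
          simp [Set.indicator_apply, le_of_lt hn]
        rw [show (({ω' | U ω' ≤ h₀ ω'}.indicator (fun _ => (1 : ℝ))) ω) = 1 by
          simp [Set.indicator_apply, hle]]
        exact Tendsto.congr' this.symm tendsto_const_nhds
      · have : ∀ n, ({ω' | U ω' ≤ h n ω'}.indicator (fun _ => (1 : ℝ))) ω = 0 := by
          intro n
          have : ¬ U ω ≤ h n ω := fun hc =>
            hle (hc.trans (hmon.ge_of_tendsto htend n))
          simp [Set.indicator_apply, this]
        simp only [this, Set.indicator_apply, Set.mem_setOf_eq, hle, if_false]
        exact tendsto_const_nhds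
  have htim : TendstoInMeasure μ
      (fun n => {ω | U ω ≤ h n ω}.indicator (fun _ => (1 : ℝ))) atTop
      ({ω | U ω ≤ h₀ ω}.indicator (fun _ => (1 : ℝ))) :=
    tendstoInMeasure_of_tendsto_ae (fun n => (hξmeas n).aestronglyMeasurable) hae
  exact hLeb _ _ hξmeas hηmeas ⟨1, fun n ω => hbd _ ω⟩ ⟨1, fun ω => hbd _ ω⟩ htim
end

section
/- Suppose F₂ is atomless conditionally to F₁, let U be an F₂-measurable random variable uniformly distributed on [0, 1] and independent of F₁, and let u_{1,2} : L^∞(F₂) → L^∞(F₁) be a conditional coherent utility function having the Fatou property and the Lebesgue property. Then for every F₁-measurable function h : Ω → [0, 1] there exists an F₁-measurable function g : Ω → [0, 1] such that the set B_g = {U ≤ g} satisfies u_{1,2}(1_{B_g}) = h almost surely. -/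
/-!
Write `ψ q = u(1_{U ≤ q})` for rational `q`. Monotonicity of `u` makes `q ↦ ψ q` increasing, and
since `U ∈ [0, 1]` almost surely, `ψ q = 0` for `q < 0` and `ψ q = 1` for `q ≥ 1`. The
`F₁`-measurable quantile `g = inf {q ≥ 0 | h ≤ ψ q} ∧ 1` then satisfies `h ≤ ψ q` for `q > g` and
`ψ q ≤ h` for `q < g`. For an `F₁`-measurable rational-valued `r`, locality of `u` (positive
homogeneity with the weights `1_A`, `A ∈ F₁`) gives `u(1_{U ≤ r}) = ψ r`, while independence of
`U` from `F₁` bounds `P(1_{U ≤ r} ≠ 1_{U ≤ g})` by `2 ‖r - g‖∞`. Approximating `g` from above and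
from below and passing to the limit with the Lebesgue property gives `h ≤ u(1_{U ≤ g}) ≤ h`.
-/

open MeasureTheory

open ProbabilityTheory Filter Topology Set
open scoped ENNReal

lemma measurable_indicator_setOf_le {Ω : Type*} [MeasurableSpace Ω] {U f : Ω → ℝ}
    (hU : Measurable U) (hf : Measurable f) :
    Measurable ({ω | U ω ≤ f ω}.indicator fun _ => (1 : ℝ)) :=
  measurable_const.indicator (measurableSet_le hU hf)

lemma abs_indicator_one_le {Ω : Type*} (s : Set Ω) (ω : Ω) :
    |s.indicator (fun _ => (1 : ℝ)) ω| ≤ 1 := by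
  by_cases h : ω ∈ s <;> simp [h]

namespace Bdd

variable {Ω : Type*} {f g : Ω → ℝ}

lemma add (hf : Bdd f) (hg : Bdd g) : Bdd (f + g) := by
  obtain ⟨C, hC⟩ := hf
  obtain ⟨D, hD⟩ := hg
  exact ⟨C + D, fun ω => (abs_add_le _ _).trans (add_le_add (hC ω) (hD ω))⟩

lemma sub (hf : Bdd f) (hg : Bdd g) : Bdd (f - g) := by
  obtain ⟨C, hC⟩ := hf
  obtain ⟨D, hD⟩ := hg
  exact ⟨C + D, fun ω => (abs_sub _ _).trans (add_le_add (hC ω) (hD ω))⟩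

lemma const (c : ℝ) : Bdd fun _ : Ω => c := ⟨|c|, fun _ => le_rfl⟩

lemma indicator_one (s : Set Ω) : Bdd (s.indicator fun _ => (1 : ℝ)) :=
  ⟨1, abs_indicator_one_le s⟩

end Bdd

section InMeasure

variable {α ι E : Type*} {m : MeasurableSpace α} {μ : Measure α} [PseudoEMetricSpace E]

lemma tendstoInMeasure_of_tendsto_measure_ne {l : Filter ι} {f : ι → α → E} {g : α → E}
    (h : Tendsto (fun i => μ {x | f i x ≠ g x}) l (𝓝 0)) : TendstoInMeasure μ f l g := by
  refine fun ε hε => tendsto_of_tendsto_of_tendsto_of_le_of_le tendsto_const_nhds h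
    (fun _ => zero_le) fun i => measure_mono fun x (hx : ε ≤ edist (f i x) (g x)) heq => ?_
  rw [heq, edist_self] at hx
  exact hε.not_ge hx

lemma TendstoInMeasure.ae_mem_of_forall {f : ℕ → α → E} {g : α → E} {S : α → Set E}
    (hS : ∀ x, IsClosed (S x)) (hfg : TendstoInMeasure μ f atTop g)
    (hf : ∀ n, ∀ᵐ x ∂μ, f n x ∈ S x) : ∀ᵐ x ∂μ, g x ∈ S x := by
  obtain ⟨ns, -, hlim⟩ := hfg.exists_seq_tendsto_ae
  filter_upwards [hlim, ae_all_iff.2 hf] with x hx hfx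
  exact (hS x).mem_of_tendsto hx (Eventually.of_forall fun i => hfx (ns i))

end InMeasure

lemma measure_mem_le_of_indep {Ω ι β : Type*} {m1 m2 : MeasurableSpace Ω} [Countable ι]
    [MeasurableSpace ι] [MeasurableSingletonClass ι] [MeasurableSpace β] (hm : m1 ≤ m2)
    {μ : @Measure Ω m2} [IsProbabilityMeasure μ] {X : Ω → β}
    (hX : Indep (MeasurableSpace.comap X ‹_›) m1 μ) {r : Ω → ι} (hr : Measurable[m1] r)
    {I : ι → Set β} (hI : ∀ i, MeasurableSet (I i)) {ε : ℝ≥0∞}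
    (hε : ∀ i, μ (X ⁻¹' I i) ≤ ε) : μ {ω | X ω ∈ I (r ω)} ≤ ε := by
  have hfiber : ∀ i, MeasurableSet[m1] (r ⁻¹' {i}) := fun i => hr (measurableSet_singleton i)
  have hunion : {ω | X ω ∈ I (r ω)} = ⋃ i, X ⁻¹' I i ∩ r ⁻¹' {i} := by
    ext ω
    simp
  calc μ {ω | X ω ∈ I (r ω)} ≤ ∑' i, μ (X ⁻¹' I i ∩ r ⁻¹' {i}) := hunion ▸ measure_iUnion_le _
    _ = ∑' i, μ (X ⁻¹' I i) * μ (r ⁻¹' {i}) := by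
        congr 1 with i
        exact (Indep_iff _ _ μ).1 hX _ _ ⟨I i, hI i, rfl⟩ (hfiber i)
    _ ≤ ∑' i, ε * μ (r ⁻¹' {i}) := by gcongr with i; exact hε i
    _ = ε * ∑' i, μ (r ⁻¹' {i}) := ENNReal.tsum_mul_left
    _ ≤ ε * 1 := by
        gcongr
        exact (tsum_meas_le_meas_iUnion_of_disjoint μ (fun i => hm _ (hfiber i))
          (pairwise_disjoint_fiber r)).trans prob_le_one
    _ = ε := mul_one ε

noncomputable def ratQuantile (φ : ℚ → ℝ) (y : ℝ) : ℝ :=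
  ⨅ q : ℚ, if 0 ≤ q ∧ y ≤ φ q then (q : ℝ) else 1

section RatQuantile

variable {φ : ℚ → ℝ} {y : ℝ}

lemma ratQuantile_term_nonneg (q : ℚ) : 0 ≤ if 0 ≤ q ∧ y ≤ φ q then (q : ℝ) else 1 := by
  split_ifs with h
  · exact_mod_cast h.1
  · exact zero_le_one

lemma bddBelow_ratQuantile :
    BddBelow (range fun q : ℚ => if 0 ≤ q ∧ y ≤ φ q then (q : ℝ) else 1) :=
  ⟨0, forall_mem_range.2 ratQuantile_term_nonneg⟩

lemma ratQuantile_mem_Icc : ratQuantile φ y ∈ Icc 0 1 := by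
  refine ⟨le_ciInf ratQuantile_term_nonneg, (ciInf_le bddBelow_ratQuantile (-1)).trans ?_⟩
  norm_num

lemma le_of_ratQuantile_lt (hφ : Monotone φ) (h1 : ∀ q : ℚ, 1 ≤ q → y ≤ φ q) {q : ℚ}
    (hq : ratQuantile φ y < q) : y ≤ φ q := by
  obtain ⟨r, hr⟩ := exists_lt_of_ciInf_lt hq
  split_ifs at hr with hyr
  · exact hyr.2.trans (hφ (by exact_mod_cast hr.le))
  · exact h1 q (by exact_mod_cast hr.le)

lemma le_of_lt_ratQuantile (h0 : ∀ q : ℚ, q < 0 → φ q ≤ y) {q : ℚ}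
    (hq : (q : ℝ) < ratQuantile φ y) : φ q ≤ y := by
  rcases lt_or_ge q 0 with hneg | hnonneg
  · exact h0 q hneg
  by_contra! hyq
  have := ciInf_le (bddBelow_ratQuantile (φ := φ) (y := y)) q
  rw [if_pos ⟨hnonneg, hyq.le⟩] at this
  exact this.not_gt hq

lemma Measurable.ratQuantile {Ω : Type*} {m : MeasurableSpace Ω} {ψ : ℚ → Ω → ℝ} {h : Ω → ℝ}
    (hψ : ∀ q, Measurable (ψ q)) (hh : Measurable h) :
    Measurable fun ω => _root_.ratQuantile (fun q => ψ q ω) (h ω) :=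
  .iInf fun q => Measurable.ite ((MeasurableSet.const (0 ≤ q)).inter (measurableSet_le hh (hψ q)))
    measurable_const measurable_const

end RatQuantile

noncomputable def ratAbove (n : ℕ) (x : ℝ) : ℚ := (⌊x * (n + 1)⌋ + 1) / (n + 1)

lemma ratAbove_cast (n : ℕ) (x : ℝ) : (ratAbove n x : ℝ) = (⌊x * (n + 1)⌋ + 1) / (n + 1) := by
  simp [ratAbove]

lemma lt_ratAbove (n : ℕ) (x : ℝ) : x < ratAbove n x := by
  rw [ratAbove_cast, lt_div_iff₀ (by positivity)]
  exact Int.lt_floor_add_one _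

lemma ratAbove_le (n : ℕ) (x : ℝ) : (ratAbove n x : ℝ) ≤ x + 1 / (n + 1) := by
  rw [ratAbove_cast, div_le_iff₀ (by positivity), add_mul, one_div_mul_cancel (by positivity)]
  linarith [Int.floor_le (x * (n + 1))]

lemma abs_ratAbove_sub_le (n : ℕ) (x : ℝ) : |(ratAbove n x : ℝ) - x| ≤ 1 / (n + 1) := by
  rw [abs_of_pos (sub_pos.2 (lt_ratAbove n x))]
  linarith [ratAbove_le n x]

lemma measurable_ratAbove (n : ℕ) : Measurable (ratAbove n) :=
  (measurable_from_top (f := fun z : ℤ => ((z : ℚ) + 1) / (n + 1))).comp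
    (Int.measurable_floor.comp (measurable_id.mul_const _))

noncomputable def ratBelow (n : ℕ) (x : ℝ) : ℚ := -ratAbove n (-x)

lemma ratBelow_lt (n : ℕ) (x : ℝ) : (ratBelow n x : ℝ) < x := by
  simpa [ratBelow] using neg_lt_neg (lt_ratAbove n (-x))

lemma abs_ratBelow_sub_le (n : ℕ) (x : ℝ) : |(ratBelow n x : ℝ) - x| ≤ 1 / (n + 1) := by
  rw [ratBelow, Rat.cast_neg, ← abs_neg, neg_sub_left, neg_neg, add_comm, ← sub_neg_eq_add]
  exact abs_ratAbove_sub_le n (-x)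

lemma measurable_ratBelow (n : ℕ) : Measurable (ratBelow n) :=
  ((measurable_ratAbove n).comp measurable_neg).neg

namespace CondCoherentUtility

variable {Ω : Type*} {m1 m2 : MeasurableSpace Ω} {μ : @Measure Ω m2} {u : (Ω → ℝ) → Ω → ℝ}
  {ξ η : Ω → ℝ}

lemma superadditive (hu : CondCoherentUtility m1 m2 μ u) (hξ : Measurable[m2] ξ) (hξb : Bdd ξ)
    (hη : Measurable[m2] η) (hηb : Bdd η) : ∀ᵐ ω ∂μ, u ξ ω + u η ω ≤ u (ξ + η) ω := by
  have hconc := hu.concave ξ η (fun _ => 1 / 2) hξ hξb hη hηb measurable_const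
    fun _ => by norm_num
  have hhom := hu.poshom (ξ + η) (fun _ => 1 / 2) (hξ.add hη) (hξb.add hηb) measurable_const
    (Bdd.const _) fun _ => by norm_num
  have hmid : (fun ω => 1 / 2 * ξ ω + (1 - 1 / 2) * η ω) = fun ω => 1 / 2 * (ξ + η) ω := by
    ext ω
    simp only [Pi.add_apply]
    ring
  rw [hmid] at hconc
  filter_upwards [hconc, hhom] with ω hconc hhom
  rw [hhom] at hconc
  linarith

lemma mono (hu : CondCoherentUtility m1 m2 μ u) (hξ : Measurable[m2] ξ) (hξb : Bdd ξ)
    (hη : Measurable[m2] η) (hηb : Bdd η) (hle : ξ ≤ η) : ∀ᵐ ω ∂μ, u ξ ω ≤ u η ω := by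
  have hsum := hu.superadditive hξ hξb (hη.sub hξ) (hηb.sub hξb)
  rw [add_sub_cancel] at hsum
  filter_upwards [hsum, hu.nonneg _ (hη.sub hξ) (hηb.sub hξb) fun ω => sub_nonneg.2 (hle ω)]
    with ω hsum hnonneg
  linarith

lemma map_const (hu : CondCoherentUtility m1 m2 μ u) (c : ℝ) :
    u (fun _ => c) =ᵐ[μ] fun _ => c := by
  have htransl := hu.transl 0 (fun _ => c) measurable_zero ⟨0, by simp⟩ measurable_const
    (Bdd.const c)
  rw [zero_add] at htransl
  filter_upwards [htransl, hu.map_zero] with ω htransl hzero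
  simp [htransl, hzero]

lemma ae_eq_of_eqOn (hu : CondCoherentUtility m1 m2 μ u) {A : Set Ω} (hA : MeasurableSet[m1] A)
    (hξ : Measurable[m2] ξ) (hξb : Bdd ξ) (hη : Measurable[m2] η) (hηb : Bdd η)
    (heq : EqOn ξ η A) : ∀ᵐ ω ∂μ, ω ∈ A → u ξ ω = u η ω := by
  set χ : Ω → ℝ := A.indicator fun _ => 1
  have hχ : Measurable[m1] χ := measurable_const.indicator hA
  have hχ0 : ∀ ω, 0 ≤ χ ω := fun ω => indicator_nonneg (fun _ _ => zero_le_one) ω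
  have hχξ : (fun ω => χ ω * ξ ω) = fun ω => χ ω * η ω := by
    ext ω
    by_cases hω : ω ∈ A
    · simp [χ, hω, heq hω]
    · simp [χ, hω]
  have hhomξ := hu.poshom ξ χ hξ hξb hχ (Bdd.indicator_one A) hχ0
  rw [hχξ] at hhomξ
  filter_upwards [hhomξ, hu.poshom η χ hη hηb hχ (Bdd.indicator_one A) hχ0]
    with ω hhomξ hhomη hω
  simpa [χ, hω] using hhomξ.symm.trans hhomη

lemma ae_eq_comp (hu : CondCoherentUtility m1 m2 μ u) {ι : Type*} [Countable ι]
    [MeasurableSpace ι] [MeasurableSingletonClass ι] {ξ : ι → Ω → ℝ} {r : Ω → ι}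
    (hr : Measurable[m1] r) (hξ : ∀ i, Measurable[m2] (ξ i)) (hξb : ∀ i, Bdd (ξ i))
    (hglue : Measurable[m2] fun ω => ξ (r ω) ω) (hglueb : Bdd fun ω => ξ (r ω) ω) :
    u (fun ω => ξ (r ω) ω) =ᵐ[μ] fun ω => u (ξ (r ω)) ω := by
  have hpiece : ∀ i, ∀ᵐ ω ∂μ, r ω = i → u (fun ω => ξ (r ω) ω) ω = u (ξ i) ω := fun i =>
    hu.ae_eq_of_eqOn (hr (measurableSet_singleton i)) hglue hglueb (hξ i) (hξb i)
      fun ω (hω : r ω = i) => by simp only [hω]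
  filter_upwards [ae_all_iff.2 hpiece] with ω hω
  exact hω (r ω) rfl

end CondCoherentUtility

lemma LebesgueProp.congr_ae {Ω : Type*} {m2 : MeasurableSpace Ω} {μ : Measure Ω}
    {u : (Ω → ℝ) → Ω → ℝ} (hLeb : LebesgueProp μ u) {ξ η : Ω → ℝ} (hξ : Measurable ξ)
    (hξb : Bdd ξ) (hη : Measurable η) (hηb : Bdd η) (hξη : ξ =ᵐ[μ] η) : u ξ =ᵐ[μ] u η := by
  have hconst : ∀ ζ : Ω → ℝ, TendstoInMeasure μ (fun _ : ℕ => ζ) atTop ζ := fun ζ =>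
    tendstoInMeasure_of_tendsto_measure_ne (by simp)
  obtain ⟨C, hC⟩ := hξb
  exact tendstoInMeasure_ae_unique (hconst (u ξ))
    (hLeb _ η (fun _ => hξ) hη ⟨C, fun _ => hC⟩ hηb ((hconst ξ).congr_right hξη))

lemma CondCoherentUtility.ae_eq_const {Ω : Type*} {m1 m2 : MeasurableSpace Ω}
    {μ : @Measure Ω m2} {u : (Ω → ℝ) → Ω → ℝ} (hu : CondCoherentUtility m1 m2 μ u)
    (hLeb : LebesgueProp μ u) {ξ : Ω → ℝ} (hξ : Measurable[m2] ξ) (hξb : Bdd ξ) {c : ℝ}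
    (hξc : ξ =ᵐ[μ] fun _ => c) : u ξ =ᵐ[μ] fun _ => c :=
  (hLeb.congr_ae hξ hξb measurable_const (Bdd.const c) hξc).trans (hu.map_const c)

section UniformLaw

variable {Ω : Type*} [MeasurableSpace Ω] {μ : Measure Ω} {U : Ω → ℝ}

lemma ae_mem_Icc_of_map_eq (hU : Measurable U) (hUdist : μ.map U = volume.restrict (Icc 0 1)) :
    ∀ᵐ ω ∂μ, U ω ∈ Icc (0 : ℝ) 1 :=
  ae_of_ae_map hU.aemeasurable (hUdist ▸ ae_restrict_mem measurableSet_Icc)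

lemma measure_preimage_Ioc_le_of_map_eq (hU : Measurable U)
    (hUdist : μ.map U = volume.restrict (Icc 0 1)) (a b : ℝ) :
    μ (U ⁻¹' Ioc a b) ≤ ENNReal.ofReal (b - a) := by
  rw [← Measure.map_apply hU measurableSet_Ioc, hUdist, ← Real.volume_Ioc]
  exact Measure.restrict_le_self _

end UniformLaw

section IndependentThreshold

variable {Ω : Type*} {m1 m2 : MeasurableSpace Ω} {μ : @Measure Ω m2} {U : Ω → ℝ}
  {u : (Ω → ℝ) → Ω → ℝ}

lemma tendstoInMeasure_indicator_le (hm : m1 ≤ m2) [IsProbabilityMeasure μ]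
    (hUlaw : ∀ a b, μ (U ⁻¹' Ioc a b) ≤ ENNReal.ofReal (b - a))
    (hUindep : Indep (MeasurableSpace.comap U Real.measurableSpace) m1 μ)
    {r : ℕ → Ω → ℚ} (hr : ∀ n, Measurable[m1] (r n)) {g : Ω → ℝ}
    (hrg : ∀ n ω, |(r n ω : ℝ) - g ω| ≤ 1 / (n + 1)) :
    TendstoInMeasure μ (fun n => {ω | U ω ≤ r n ω}.indicator fun _ => (1 : ℝ)) atTop
      ({ω | U ω ≤ g ω}.indicator fun _ => 1) := by
  refine tendstoInMeasure_of_tendsto_measure_ne (tendsto_of_tendsto_of_tendsto_of_le_of_le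
    tendsto_const_nhds (h := fun n : ℕ => ENNReal.ofReal (2 * (1 / (n + 1)))) ?_
    (fun _ => zero_le) fun n => ?_)
  · simpa using ENNReal.tendsto_ofReal (tendsto_one_div_add_atTop_nhds_zero_nat.const_mul 2)
  -- the two indicators differ only where `U` lies between `r n` and `g`
  refine (measure_mono fun ω hω => ?_).trans (measure_mem_le_of_indep hm hUindep (hr n)
    (I := fun q => Ioc ((q : ℝ) - 1 / (n + 1)) (q + 1 / (n + 1))) (fun _ => measurableSet_Ioc)
    fun q => (hUlaw _ _).trans_eq (by ring_nf))
  obtain ⟨hlo, hhi⟩ := abs_le.1 (hrg n ω)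
  by_cases hr : U ω ≤ r n ω <;> by_cases hg : U ω ≤ g ω <;>
    simp only [mem_ofPred_eq, indicator_apply, hr, hg, ne_eq, not_true_eq_false, if_true,
      if_false] at hω <;>
    exact ⟨by linarith, by linarith⟩

lemma ae_utility_indicator_mem_of_approx (hm : m1 ≤ m2) [IsProbabilityMeasure μ]
    (hU : Measurable[m2] U) (hUlaw : ∀ a b, μ (U ⁻¹' Ioc a b) ≤ ENNReal.ofReal (b - a))
    (hUindep : Indep (MeasurableSpace.comap U Real.measurableSpace) m1 μ)
    (hu : CondCoherentUtility m1 m2 μ u) (hLeb : LebesgueProp μ u)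
    {g : Ω → ℝ} (hg : Measurable[m1] g) {r : ℕ → Ω → ℚ} (hr : ∀ n, Measurable[m1] (r n))
    (hrg : ∀ n ω, |(r n ω : ℝ) - g ω| ≤ 1 / (n + 1)) {S : Ω → Set ℝ}
    (hS : ∀ ω, IsClosed (S ω))
    (hrS : ∀ n, ∀ᵐ ω ∂μ, u ({ω' | U ω' ≤ r n ω}.indicator fun _ => 1) ω ∈ S ω) :
    ∀ᵐ ω ∂μ, u ({ω | U ω ≤ g ω}.indicator fun _ => 1) ω ∈ S ω := by
  have hind : ∀ {f : Ω → ℝ}, Measurable[m1] f →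
      Measurable[m2] ({ω | U ω ≤ f ω}.indicator fun _ => (1 : ℝ)) := fun hf =>
    measurable_indicator_setOf_le hU (hf.mono hm le_rfl)
  have hrR : ∀ n, Measurable[m1] fun ω => (r n ω : ℝ) := fun n =>
    Measurable.of_discrete.comp (hr n)
  have hglue : ∀ n, u ({ω | U ω ≤ r n ω}.indicator fun _ => 1) =ᵐ[μ]
      fun ω => u ({ω' | U ω' ≤ r n ω}.indicator fun _ => 1) ω := fun n =>
    hu.ae_eq_comp (ξ := fun q : ℚ => {ω | U ω ≤ q}.indicator fun _ => 1) (hr n)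
      (fun _ => hind measurable_const) (fun _ => Bdd.indicator_one _) (hind (hrR n))
      (Bdd.indicator_one _)
  refine TendstoInMeasure.ae_mem_of_forall hS (hLeb _ _ (fun n => hind (hrR n)) (hind hg)
    ⟨1, fun _ => abs_indicator_one_le _⟩ (Bdd.indicator_one _)
    (tendstoInMeasure_indicator_le hm hUlaw hUindep hr hrg)) fun n => ?_
  filter_upwards [hglue n, hrS n] with ω hglue hrS
  rwa [hglue]

lemma ae_monotone_utility_indicator (hu : CondCoherentUtility m1 m2 μ u) (hU : Measurable[m2] U) :
    ∀ᵐ ω ∂μ, Monotone fun q : ℚ => u ({ω' | U ω' ≤ q}.indicator fun _ => 1) ω := by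
  have hpair : ∀ a b : ℚ, ∀ᵐ ω ∂μ, a ≤ b → u ({ω' | U ω' ≤ a}.indicator fun _ => 1) ω ≤
      u ({ω' | U ω' ≤ b}.indicator fun _ => 1) ω := by
    intro a b
    by_cases hab : a ≤ b
    · filter_upwards [hu.mono (measurable_indicator_setOf_le hU measurable_const)
        (Bdd.indicator_one _) (measurable_indicator_setOf_le hU measurable_const)
        (Bdd.indicator_one _) (indicator_le_indicator_of_subset
          (fun ω (hω : U ω ≤ a) => hω.trans (Rat.cast_le.2 hab)) fun _ => zero_le_one)]
        with ω hω _ using hω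
    · exact Eventually.of_forall fun _ h => absurd h hab
  filter_upwards [ae_all_iff.2 fun a => ae_all_iff.2 (hpair a)] with ω hω a b hab
  exact hω a b hab

lemma ae_utility_indicator_eq_one (hu : CondCoherentUtility m1 m2 μ u) (hLeb : LebesgueProp μ u)
    (hU : Measurable[m2] U) (hU1 : ∀ᵐ ω ∂μ, U ω ≤ 1) :
    ∀ᵐ ω ∂μ, ∀ q : ℚ, 1 ≤ q → u ({ω' | U ω' ≤ q}.indicator fun _ => 1) ω = 1 := by
  refine ae_all_iff.2 fun q => ?_
  by_cases hq : 1 ≤ q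
  · have hfull : ({ω' | U ω' ≤ q}.indicator fun _ => (1 : ℝ)) =ᵐ[μ] fun _ => 1 := by
      filter_upwards [hU1] with ω hω
      simp [hω.trans (by exact_mod_cast hq : (1 : ℝ) ≤ q)]
    filter_upwards [hu.ae_eq_const hLeb (measurable_indicator_setOf_le hU measurable_const)
      (Bdd.indicator_one _) hfull] with ω hω _ using hω
  · exact Eventually.of_forall fun _ h => absurd h hq

lemma ae_utility_indicator_eq_zero (hu : CondCoherentUtility m1 m2 μ u) (hLeb : LebesgueProp μ u)
    (hU : Measurable[m2] U) (hU0 : ∀ᵐ ω ∂μ, 0 ≤ U ω) :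
    ∀ᵐ ω ∂μ, ∀ q : ℚ, q < 0 → u ({ω' | U ω' ≤ q}.indicator fun _ => 1) ω = 0 := by
  refine ae_all_iff.2 fun q => ?_
  by_cases hq : q < 0
  · have hnull : ({ω' | U ω' ≤ q}.indicator fun _ => (1 : ℝ)) =ᵐ[μ] fun _ => 0 := by
      filter_upwards [hU0] with ω hω
      simp [((by exact_mod_cast hq : (q : ℝ) < 0).trans_le hω).not_ge]
    filter_upwards [hu.ae_eq_const hLeb (measurable_indicator_setOf_le hU measurable_const)
      (Bdd.indicator_one _) hnull] with ω hω _ using hω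
  · exact Eventually.of_forall fun _ h => absurd h hq

end IndependentThreshold

theorem stmt_11_general {Ω : Type*} {m1 m2 : MeasurableSpace Ω} (hm : m1 ≤ m2)
    (μ : @Measure Ω m2) [IsProbabilityMeasure μ]
    (U : Ω → ℝ) (hU : Measurable[m2] U)
    (hUdist : μ.map U = (volume : Measure ℝ).restrict (Set.Icc 0 1))
    (hUindep : ProbabilityTheory.Indep (MeasurableSpace.comap U Real.measurableSpace) m1 μ)
    (u : (Ω → ℝ) → Ω → ℝ) (hu : CondCoherentUtility m1 m2 μ u)
    (hLeb : LebesgueProp μ u)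
    (h : Ω → ℝ) (hhmeas : Measurable[m1] h) (hhrange : ∀ ω, h ω ∈ Set.Icc (0 : ℝ) 1) :
    ∃ g : Ω → ℝ, Measurable[m1] g ∧ (∀ ω, g ω ∈ Set.Icc (0 : ℝ) 1) ∧
      u ({ω | U ω ≤ g ω}.indicator (fun _ => (1 : ℝ))) =ᵐ[μ] h := by
  set ψ : ℚ → Ω → ℝ := fun q => u ({ω | U ω ≤ q}.indicator fun _ => 1)
  have hψ : ∀ q, Measurable[m1] (ψ q) := fun q => (hu.measurable_map _
    (measurable_indicator_setOf_le hU measurable_const) (Bdd.indicator_one _)).1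
  set g : Ω → ℝ := fun ω => ratQuantile (fun q => ψ q ω) (h ω)
  have hg : Measurable[m1] g := Measurable.ratQuantile hψ hhmeas
  have hU01 := ae_mem_Icc_of_map_eq hU hUdist
  have hUlaw := measure_preimage_Ioc_le_of_map_eq hU hUdist
  have hmono := ae_monotone_utility_indicator hu hU
  have hone := ae_utility_indicator_eq_one hu hLeb hU (hU01.mono fun _ hω => hω.2)
  have hzero := ae_utility_indicator_eq_zero hu hLeb hU (hU01.mono fun _ hω => hω.1)
  have hge : ∀ᵐ ω ∂μ, u ({ω | U ω ≤ g ω}.indicator fun _ => 1) ω ∈ Ici (h ω) :=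
    ae_utility_indicator_mem_of_approx hm hU hUlaw hUindep hu hLeb hg
      (r := fun n ω => ratAbove n (g ω)) (fun n => (measurable_ratAbove n).comp hg)
      (fun n ω => abs_ratAbove_sub_le n (g ω)) (fun _ => isClosed_Ici) fun n => by
        filter_upwards [hmono, hone] with ω hmono hone
        exact le_of_ratQuantile_lt hmono (fun q hq => (hhrange ω).2.trans_eq (hone q hq).symm)
          (lt_ratAbove n (g ω))
  have hle : ∀ᵐ ω ∂μ, u ({ω | U ω ≤ g ω}.indicator fun _ => 1) ω ∈ Iic (h ω) :=
    ae_utility_indicator_mem_of_approx hm hU hUlaw hUindep hu hLeb hg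
      (r := fun n ω => ratBelow n (g ω)) (fun n => (measurable_ratBelow n).comp hg)
      (fun n ω => abs_ratBelow_sub_le n (g ω)) (fun _ => isClosed_Iic) fun n => by
        filter_upwards [hzero] with ω hzero
        exact le_of_lt_ratQuantile (fun q hq => (hzero q hq).trans_le (hhrange ω).1)
          (ratBelow_lt n (g ω))
  refine ⟨g, hg, fun ω => ratQuantile_mem_Icc, ?_⟩
  filter_upwards [hge, hle] with ω hge hle
  exact le_antisymm hle hge

/-- If `F₂` is atomless conditionally to `F₁`, `U` is uniform on `[0,1]` and independent of
`F₁`, and `u_{1,2}` is a conditional coherent utility with the Fatou and Lebesgue properties,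
then for every `F₁`-measurable `h : Ω → [0,1]` there is an `F₁`-measurable `g : Ω → [0,1]`
with `u_{1,2}(1_{U ≤ g}) = h` almost surely. -/
theorem stmt_11 {Ω : Type*} {m1 m2 : MeasurableSpace Ω} (hm : m1 ≤ m2)
    (μ : @Measure Ω m2) [IsProbabilityMeasure μ]
    (hca : CondAtomless m1 m2 μ)
    (U : Ω → ℝ) (hU : Measurable[m2] U)
    (hUdist : μ.map U = (volume : Measure ℝ).restrict (Set.Icc 0 1))
    (hUindep : ProbabilityTheory.Indep (MeasurableSpace.comap U Real.measurableSpace) m1 μ)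
    (u : (Ω → ℝ) → Ω → ℝ) (hu : CondCoherentUtility m1 m2 μ u)
    (hFatou : FatouProp μ u) (hLeb : LebesgueProp μ u)
    (h : Ω → ℝ) (hhmeas : Measurable[m1] h) (hhrange : ∀ ω, h ω ∈ Set.Icc (0 : ℝ) 1) :
    ∃ g : Ω → ℝ, Measurable[m1] g ∧ (∀ ω, g ω ∈ Set.Icc (0 : ℝ) 1) ∧
      u ({ω | U ω ≤ g ω}.indicator (fun _ => (1 : ℝ))) =ᵐ[μ] h :=
  stmt_11_general hm μ U hU hUdist hUindep u hu hLeb h hhmeas hhrange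
end
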